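/- arXiv:1710.10364 — 11 statements merged into one kernel-verified Lean document; each statement's English description precedes it below -/
import Mathlib

section
/- Let p ∈ ℝ^d be nonzero and A ∈ ℝ^{d×d}. Then for every r > 0, the maximum over vectors v with |v| = r of p·v + (1/2) v·Av differs from r|p| + (1/2) r² |p|⁻² (p·Ap) by at most 2 r³ ‖A‖² |p|⁻¹. -/
open scoped RealInnerProductSpace

/-! The value at `v₀ = (r / |p|) p` gives the lower bound. For `|v| = r`, the linear term falls
short of its maximum `r|p|` by `|p| s² / (2r)` with `s = |v - v₀|`, while the quadratic term gains
at most `2r‖A‖ s`; maximising `r‖A‖ s - |p| s² / (2r)` over `s` gives the upper bound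
`r³ ‖A‖² / (2|p|)`. -/

variable {E : Type*} [NormedAddCommGroup E] [InnerProductSpace ℝ E]

lemma abs_inner_map_self_sub_inner_map_self_le (A : E →L[ℝ] E) (v w : E) :
    |⟪v, A v⟫ - ⟪w, A w⟫| ≤ (‖v‖ + ‖w‖) * ‖A‖ * ‖v - w‖ := by
  have hsplit : ⟪v, A v⟫ - ⟪w, A w⟫ = ⟪v - w, A v⟫ + ⟪w, A (v - w)⟫ := by
    rw [map_sub, inner_sub_left, inner_sub_right]; ring
  calc |⟪v, A v⟫ - ⟪w, A w⟫|
      ≤ ‖v - w‖ * ‖A v‖ + ‖w‖ * ‖A (v - w)‖ := by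
        rw [hsplit]
        exact (abs_add_le _ _).trans
          (add_le_add (abs_real_inner_le_norm _ _) (abs_real_inner_le_norm _ _))
    _ ≤ ‖v - w‖ * (‖A‖ * ‖v‖) + ‖w‖ * (‖A‖ * ‖v - w‖) := by
        gcongr <;> exact A.le_opNorm _
    _ = (‖v‖ + ‖w‖) * ‖A‖ * ‖v - w‖ := by ring

lemma norm_smul_div_norm {p : E} (hp : p ≠ 0) {r : ℝ} (hr : 0 ≤ r) :
    ‖(r / ‖p‖) • p‖ = r := by
  have hp' : ‖p‖ ≠ 0 := norm_ne_zero_iff.mpr hp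
  rw [norm_smul, Real.norm_of_nonneg (by positivity), div_mul_cancel₀ _ hp']

lemma norm_mul_norm_sub_smul_div_norm_sq {p v : E} (hp : p ≠ 0) {r : ℝ} (hr : 0 ≤ r)
    (hv : ‖v‖ = r) :
    ‖p‖ * ‖v - (r / ‖p‖) • p‖ ^ 2 = 2 * r * (r * ‖p‖ - ⟪p, v⟫) := by
  have hp' : ‖p‖ ≠ 0 := norm_ne_zero_iff.mpr hp
  rw [norm_sub_sq_real, norm_smul_div_norm hp hr, hv, real_inner_smul_right,
    real_inner_comm]
  field_simp
  ring

lemma inner_add_half_inner_map_smul_div_norm {p : E} (hp : p ≠ 0) (A : E →L[ℝ] E) (r : ℝ) :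
    ⟪p, (r / ‖p‖) • p⟫ + (1 / 2) * ⟪(r / ‖p‖) • p, A ((r / ‖p‖) • p)⟫ =
      r * ‖p‖ + (1 / 2) * r ^ 2 * (‖p‖⁻¹) ^ 2 * ⟪p, A p⟫ := by
  have hp' : ‖p‖ ≠ 0 := norm_ne_zero_iff.mpr hp
  rw [map_smul, real_inner_smul_left, real_inner_smul_right, real_inner_smul_right,
    real_inner_self_eq_norm_sq]
  field_simp

lemma inner_add_half_inner_map_le_of_norm_eq {p v : E} (hp : p ≠ 0) (A : E →L[ℝ] E) {r : ℝ}
    (hr : 0 < r) (hv : ‖v‖ = r) :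
    ⟪p, v⟫ + (1 / 2) * ⟪v, A v⟫ ≤
      r * ‖p‖ + (1 / 2) * r ^ 2 * (‖p‖⁻¹) ^ 2 * ⟪p, A p⟫ + r ^ 3 * ‖A‖ ^ 2 / (2 * ‖p‖) := by
  set w := (r / ‖p‖) • p
  set s := ‖v - w‖
  have hnp : 0 < ‖p‖ := norm_pos_iff.mpr hp
  have hlin : ‖p‖ * s ^ 2 = 2 * r * (r * ‖p‖ - ⟪p, v⟫) :=
    norm_mul_norm_sub_smul_div_norm_sq hp hr.le hv
  have hquad : ⟪v, A v⟫ - ⟪w, A w⟫ ≤ 2 * r * ‖A‖ * s := by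
    have := (le_abs_self _).trans (abs_inner_map_self_sub_inner_map_self_le A v w)
    rwa [hv, norm_smul_div_norm hp hr.le, ← two_mul] at this
  have hgain : r * ‖A‖ * s - ‖p‖ * s ^ 2 / (2 * r) ≤ r ^ 3 * ‖A‖ ^ 2 / (2 * ‖p‖) := by
    rw [sub_le_iff_le_add, div_add_div _ _ (by positivity) (by positivity),
      le_div_iff₀ (by positivity)]
    nlinarith [sq_nonneg (‖p‖ * s - r ^ 2 * ‖A‖)]
  have hlin' : ⟪p, v⟫ = r * ‖p‖ - ‖p‖ * s ^ 2 / (2 * r) := by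
    rw [hlin]; field_simp; ring
  have hpw : ⟪p, w⟫ = r * ‖p‖ := by
    rw [real_inner_smul_right, real_inner_self_eq_norm_sq]
    field_simp
  linarith [inner_add_half_inner_map_smul_div_norm hp A r]

/-- For nonzero `p` and a matrix (linear map) `A`, the maximum over the sphere of radius `r`
of `v ↦ p·v + (1/2) v·Av` differs from `r|p| + (1/2) r² |p|⁻² p·Ap` by at most
`2 r³ ‖A‖² |p|⁻¹`. -/
theorem sphere_quadratic_max_estimate {d : ℕ}
    (p : EuclideanSpace ℝ (Fin d)) (hp : p ≠ 0)
    (A : EuclideanSpace ℝ (Fin d) →L[ℝ] EuclideanSpace ℝ (Fin d))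
    (r : ℝ) (hr : 0 < r) (M : ℝ)
    (hM : IsGreatest ((fun v => ⟪p, v⟫ + (1 / 2) * ⟪v, A v⟫) ''
      Metric.sphere (0 : EuclideanSpace ℝ (Fin d)) r) M) :
    |M - (r * ‖p‖ + (1 / 2) * r ^ 2 * (‖p‖⁻¹) ^ 2 * ⟪p, A p⟫)| ≤
      2 * r ^ 3 * ‖A‖ ^ 2 * ‖p‖⁻¹ := by
  obtain ⟨⟨v, hv, rfl⟩, hmax⟩ := hM
  have hlower := hmax ⟨(r / ‖p‖) • p, by simpa using norm_smul_div_norm hp hr.le, rfl⟩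
  beta_reduce at hlower ⊢
  rw [inner_add_half_inner_map_smul_div_norm hp A r] at hlower
  have hupper := inner_add_half_inner_map_le_of_norm_eq hp A hr (by simpa using hv)
  have hslack : r ^ 3 * ‖A‖ ^ 2 / (2 * ‖p‖) = (2 * r ^ 3 * ‖A‖ ^ 2 * ‖p‖⁻¹) / 4 := by
    field_simp
    ring
  have hbound : 0 ≤ 2 * r ^ 3 * ‖A‖ ^ 2 * ‖p‖⁻¹ := by positivity
  rw [abs_le]
  constructor <;> linarith
end

section
/- Maximum principle for the graph ∞-Laplacian: let G be a finite weighted graph with vertex set X, nonnegative symmetric edge weights w(x,y), and a nonempty boundary set O ⊂ X such that every vertex of X \ O is connected to O by a path of vertices with positive edge weights. Define the graph ∞-Laplacian L u(x) = max_{y∈X} w(x,y)(u(y) − u(x)) + min_{y∈X} w(x,y)(u(y) − u(x)). If u, v : X → ℝ satisfy L u(x) ≥ 0 ≥ L v(x) for all x ∈ X \ O, then max_{x∈X} (u(x) − v(x)) = max_{x∈O} (u(x) − v(x)). -/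
/-!
Let `x₀` maximize `u` among the maximizers of `u - v`. At an interior maximizer `x` of `u - v`
the increments of `u` are dominated by those of `v`, so `L u x ≥ 0 ≥ L v x` forces the maxima of
the two increment families to agree. If some neighbour `y` had `u y > u x`, the increment
realizing that maximum would be equal for `u` and `v`, making `y` a maximizer of `u - v` with a
larger value of `u`. Hence, when `u x = u x₀`, every neighbour of `x` carries the same values of
`u` and `v` as `x`, and following a path from `x₀` to `O` we reach a maximizer of `u - v` in `O`.
-/

open Finset

/-- The graph ∞-Laplacian on a finite vertex set. -/
noncomputable def graphInfLap {V : Type*} [Fintype V] [Nonempty V]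
    (w : V → V → ℝ) (u : V → ℝ) (x : V) : ℝ :=
  Finset.univ.sup' Finset.univ_nonempty (fun y => w x y * (u y - u x)) +
  Finset.univ.inf' Finset.univ_nonempty (fun y => w x y * (u y - u x))

/-- The graph is connected to the boundary set `O`: from every vertex outside `O` there
is a path of consecutively adjacent vertices (positive weights) ending in `O`. -/
def graphConnectedTo {V : Type*} (w : V → V → ℝ) (O : Finset V) : Prop :=
  ∀ x : V, x ∉ O → ∃ y ∈ O, Relation.ReflTransGen (fun a b => 0 < w a b) x y

theorem Finset.sup'_eq_and_inf'_eq_of_le {ι α : Type*} [AddCommGroup α] [LinearOrder α]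
    [IsOrderedAddMonoid α] {s : Finset ι} (hs : s.Nonempty) {f g : ι → α}
    (hfg : ∀ i ∈ s, f i ≤ g i) (hf : 0 ≤ s.sup' hs f + s.inf' hs f)
    (hg : s.sup' hs g + s.inf' hs g ≤ 0) :
    s.sup' hs f = s.sup' hs g ∧ s.inf' hs f = s.inf' hs g := by
  have hsup : s.sup' hs f ≤ s.sup' hs g := sup'_mono_fun hfg
  have hinf : s.inf' hs f ≤ s.inf' hs g := inf'_mono_fun hfg
  constructor
  · refine hsup.antisymm (le_of_not_gt fun hlt => ?_)
    exact (hf.trans_lt (add_lt_add_of_lt_of_le hlt hinf)).not_ge hg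
  · refine hinf.antisymm (le_of_not_gt fun hlt => ?_)
    exact (hf.trans_lt (add_lt_add_of_le_of_lt hsup hlt)).not_ge hg

theorem Relation.ReflTransGen.exists_mem_of_closed {α : Type*} {r : α → α → Prop}
    {S O : Set α} (hS : ∀ a b, r a b → a ∈ S → a ∉ O → b ∈ S) {a b : α}
    (h : Relation.ReflTransGen r a b) (ha : a ∈ S) (hb : b ∈ O) : ∃ z ∈ O, z ∈ S := by
  induction h using Relation.ReflTransGen.head_induction_on with
  | refl => exact ⟨b, hb, ha⟩
  | @head a c hac _ ih =>
    by_cases haO : a ∈ O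
    · exact ⟨a, haO, ha⟩
    · exact ih (hS a c hac ha haO)

theorem graphInfLap_neighbor_eq {V : Type*} [Fintype V] [Nonempty V] {w : V → V → ℝ}
    {u v : V → ℝ} {x : V} (hw : ∀ y, 0 ≤ w x y) (hmax : ∀ y, u y - v y ≤ u x - v x)
    (htop : ∀ y, u y - v y = u x - v x → u y ≤ u x)
    (hu : 0 ≤ graphInfLap w u x) (hv : graphInfLap w v x ≤ 0) {y : V} (hy : 0 < w x y) :
    u y = u x ∧ v y = v x := by
  set F : V → ℝ := fun y => w x y * (u y - u x)
  set G : V → ℝ := fun y => w x y * (v y - v x)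
  have hFG : ∀ y ∈ univ, F y ≤ G y := fun y _ =>
    mul_le_mul_of_nonneg_left (by linarith [hmax y]) (hw y)
  have hLu : 0 ≤ univ.sup' univ_nonempty F + univ.inf' univ_nonempty F := hu
  have hsup := (sup'_eq_and_inf'_eq_of_le univ_nonempty hFG hLu hv).1
  have hsup_nonpos : univ.sup' univ_nonempty F ≤ 0 := by
    obtain ⟨y₀, -, hy₀⟩ := exists_mem_eq_sup' univ_nonempty F
    rw [hy₀]
    by_contra! hpos
    have hwy₀ : 0 < w x y₀ := (hw y₀).lt_of_ne fun h => by simp [F, ← h] at hpos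
    have hFGy₀ : F y₀ = G y₀ :=
      (hFG y₀ (mem_univ _)).antisymm (hy₀ ▸ hsup ▸ le_sup' G (mem_univ y₀))
    have hinc : u y₀ - u x = v y₀ - v x := mul_left_cancel₀ hwy₀.ne' hFGy₀
    have hgt : u x < u y₀ := sub_pos.mp (pos_of_mul_pos_right hpos (hw y₀))
    exact hgt.not_ge (htop y₀ (by linarith))
  have hFy : F y = 0 :=
    ((le_sup' F (mem_univ y)).trans hsup_nonpos).antisymm
      (by linarith [inf'_le F (mem_univ y)])
  have hGy : G y = 0 :=
    ((le_sup' G (mem_univ y)).trans (hsup ▸ hsup_nonpos)).antisymm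
      (hFy ▸ hFG y (mem_univ y))
  constructor
  · linarith [(mul_eq_zero.mp hFy).resolve_left hy.ne']
  · linarith [(mul_eq_zero.mp hGy).resolve_left hy.ne']

theorem graphInfLap_maximum_principle_general {V : Type*} [Fintype V] [Nonempty V]
    (w : V → V → ℝ) (hw : ∀ x y, 0 ≤ w x y)
    (O : Finset V) (hO : O.Nonempty) (hconn : graphConnectedTo w O)
    (u v : V → ℝ)
    (hu : ∀ x : V, x ∉ O → 0 ≤ graphInfLap w u x)
    (hv : ∀ x : V, x ∉ O → graphInfLap w v x ≤ 0) :
    Finset.univ.sup' Finset.univ_nonempty (fun x => u x - v x) =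
      O.sup' hO (fun x => u x - v x) := by
  obtain ⟨x₁, -, hx₁⟩ := exists_max_image univ (fun x => u x - v x) univ_nonempty
  set M := u x₁ - v x₁
  have hle : ∀ x, u x - v x ≤ M := fun x => hx₁ x (mem_univ x)
  set T := univ.filter fun x => u x - v x = M
  obtain ⟨x₀, hx₀T, hx₀⟩ := exists_max_image T u ⟨x₁, by simp [T, M]⟩
  set S : Set V := {x | u x - v x = M ∧ u x = u x₀}
  have hclosed : ∀ a b, 0 < w a b → a ∈ S → a ∉ (O : Set V) → b ∈ S := by
    rintro a b hab ⟨haM, hau⟩ haO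
    have htop : ∀ y, u y - v y = u a - v a → u y ≤ u a := fun y hy =>
      hau ▸ hx₀ y (by simp [T, hy, haM])
    obtain ⟨hub, hvb⟩ := graphInfLap_neighbor_eq (hw a) (fun y => haM ▸ hle y) htop
      (hu a haO) (hv a haO) hab
    exact ⟨by rw [hub, hvb, haM], hub.trans hau⟩
  have hx₀S : x₀ ∈ S := ⟨(mem_filter.mp hx₀T).2, rfl⟩
  obtain ⟨z, hzO, hzM, -⟩ : ∃ z ∈ (O : Set V), z ∈ S := by
    by_cases hx₀O : x₀ ∈ O
    · exact ⟨x₀, hx₀O, hx₀S⟩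
    · obtain ⟨y, hyO, hpath⟩ := hconn x₀ hx₀O
      exact hpath.exists_mem_of_closed hclosed hx₀S hyO
  refine (sup'_le _ _ fun y _ => ?_).antisymm (sup'_mono _ (subset_univ O) hO)
  exact (hle y).trans (hzM ▸ le_sup' (fun x => u x - v x) hzO)

/-- Maximum principle for the graph ∞-Laplacian. -/
theorem graphInfLap_maximum_principle {V : Type*} [Fintype V] [Nonempty V]
    (w : V → V → ℝ) (hw : ∀ x y, 0 ≤ w x y) (hsym : ∀ x y, w x y = w y x)
    (O : Finset V) (hO : O.Nonempty) (hconn : graphConnectedTo w O)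
    (u v : V → ℝ)
    (hu : ∀ x : V, x ∉ O → 0 ≤ graphInfLap w u x)
    (hv : ∀ x : V, x ∉ O → graphInfLap w v x ≤ 0) :
    Finset.univ.sup' Finset.univ_nonempty (fun x => u x - v x) =
      O.sup' hO (fun x => u x - v x) :=
  graphInfLap_maximum_principle_general w hw O hO hconn u v hu hv
end

section
/- Comparison/uniqueness for the graph ∞-Laplacian: under the same connectivity hypotheses, if u, v : X → ℝ satisfy L u(x) = 0 = L v(x) for all x ∈ X \ O, then max_{x∈X} |u(x) − v(x)| = max_{x∈O} |u(x) − v(x)|. In particular, a solution of L u = 0 on X \ O with prescribed values u = g on O is unique if it exists. -/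
/-!
Pick `x` maximising `(u - v, u)` lexicographically. If `x ∉ O`, then `u y - u x ≤ v y - v x`
for all `y`, so the max and the min of the weighted increments of `u` at `x` are at most those
of `v`; as both sums vanish, they coincide. A positive largest increment of `u` would then also
be one of `v`, leading to another maximiser of `u - v` with larger `u`. Hence all increments of
`u`, and so of `v`, at `x` vanish: `u` and `v` are constant across every edge at `x`, and the
lexicographic maximisers spread along paths until they reach `O`.
-/

open Finset

namespace Finset

variable {ι α : Type*} [AddCommGroup α] [LinearOrder α] [IsOrderedAddMonoid α]
  {s : Finset ι} {hs : s.Nonempty}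

theorem sup'_eq_and_inf'_eq_of_le_of_sup'_add_inf'_eq {f g : ι → α} (hfg : ∀ i ∈ s, f i ≤ g i)
    (h : s.sup' hs f + s.inf' hs f = s.sup' hs g + s.inf' hs g) :
    s.sup' hs f = s.sup' hs g ∧ s.inf' hs f = s.inf' hs g :=
  (add_eq_add_iff_eq_and_eq (sup'_mono_fun hfg) (inf'_mono_fun hfg)).1 h

theorem eq_zero_of_sup'_add_inf'_eq_zero {f : ι → α} (h : s.sup' hs f + s.inf' hs f = 0)
    (hsup : s.sup' hs f ≤ 0) {i : ι} (hi : i ∈ s) : f i = 0 := by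
  have hinf : 0 ≤ s.inf' hs f := by
    rw [eq_neg_of_add_eq_zero_right h]
    exact neg_nonneg.2 hsup
  exact le_antisymm ((le_sup' f hi).trans hsup) (hinf.trans (inf'_le f hi))

end Finset

theorem graphConnectedTo.exists_mem {V : Type*} {w : V → V → ℝ} {O : Finset V}
    (hconn : graphConnectedTo w O) {P : V → Prop}
    (hP : ∀ a b, a ∉ O → P a → 0 < w a b → P b) {x : V} (hx : P x) : ∃ z ∈ O, P z := by
  by_cases hxO : x ∈ O
  · exact ⟨x, hxO, hx⟩
  obtain ⟨y, hyO, hxy⟩ := hconn x hxO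
  suffices (∃ z ∈ O, P z) ∨ P y from this.elim id fun hy => ⟨y, hyO, hy⟩
  clear hxO hyO
  induction hxy with
  | refl => exact Or.inr hx
  | @tail b c _ hbc ih =>
    refine ih.elim Or.inl fun hb => ?_
    by_cases hbO : b ∈ O
    · exact Or.inl ⟨b, hbO, hb⟩
    · exact Or.inr (hP b c hbO hb hbc)

section Comparison

variable {V : Type*} [Fintype V] [Nonempty V] {w : V → V → ℝ} {u v : V → ℝ} {x : V}

theorem graphInfLap_sup'_nonpos_of_lexMax (hw : ∀ y, 0 ≤ w x y)
    (hu : graphInfLap w u x = 0) (hv : graphInfLap w v x = 0)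
    (hmax : ∀ y, toLex (u y - v y, u y) ≤ toLex (u x - v x, u x)) :
    univ.sup' univ_nonempty (fun y => w x y * (u y - u x)) ≤ 0 ∧
      univ.sup' univ_nonempty (fun y => w x y * (v y - v x)) ≤ 0 := by
  set f := fun y => w x y * (u y - u x)
  set g := fun y => w x y * (v y - v x)
  have hfg : ∀ y ∈ univ, f y ≤ g y := fun y _ => by
    have : u y - v y ≤ u x - v x := Prod.Lex.monotone_fst _ _ (hmax y)
    exact mul_le_mul_of_nonneg_left (by linarith) (hw y)
  obtain ⟨hsup, -⟩ := sup'_eq_and_inf'_eq_of_le_of_sup'_add_inf'_eq hfg (hu.trans hv.symm)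
  have hsupf : univ.sup' univ_nonempty f ≤ 0 := by
    obtain ⟨y, -, hy⟩ := exists_mem_eq_sup' univ_nonempty f
    by_contra! hpos
    rw [hy] at hpos
    -- `f y ≤ g y ≤ sup' g = sup' f = f y`, so `y` is again a maximiser of `u - v`
    have hfy : f y = g y := le_antisymm (hfg y (mem_univ y)) (hy ▸ hsup ▸ le_sup' g (mem_univ y))
    have hincr : u y - u x = v y - v x :=
      mul_left_cancel₀ (left_ne_zero_of_mul hpos.ne') hfy
    have huy : u x < u y := sub_pos.1 (pos_of_mul_pos_right hpos (hw y))
    rcases Prod.Lex.toLex_le_toLex.1 (hmax y) with h | ⟨-, h⟩ <;> simp only at h <;> linarith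
  exact ⟨hsupf, hsup ▸ hsupf⟩

theorem graphInfLap_neighbor_eq_of_lexMax (hw : ∀ y, 0 ≤ w x y)
    (hu : graphInfLap w u x = 0) (hv : graphInfLap w v x = 0)
    (hmax : ∀ y, toLex (u y - v y, u y) ≤ toLex (u x - v x, u x)) {z : V} (hz : 0 < w x z) :
    u z = u x ∧ v z = v x := by
  obtain ⟨hsu, hsv⟩ := graphInfLap_sup'_nonpos_of_lexMax hw hu hv hmax
  have hfu := eq_zero_of_sup'_add_inf'_eq_zero hu hsu (mem_univ z)
  have hfv := eq_zero_of_sup'_add_inf'_eq_zero hv hsv (mem_univ z)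
  rw [mul_eq_zero, sub_eq_zero] at hfu hfv
  exact ⟨hfu.resolve_left hz.ne', hfv.resolve_left hz.ne'⟩

theorem graphInfLap_exists_mem_forall_sub_le (hw : ∀ x y, 0 ≤ w x y) {O : Finset V}
    (hconn : graphConnectedTo w O)
    (hu : ∀ x, x ∉ O → graphInfLap w u x = 0) (hv : ∀ x, x ∉ O → graphInfLap w v x = 0) :
    ∃ z ∈ O, ∀ y, u y - v y ≤ u z - v z := by
  set φ := fun y => toLex (u y - v y, u y)
  obtain ⟨x₀, -, hx₀⟩ := exists_max_image univ φ univ_nonempty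
  have hspread : ∀ a b, a ∉ O → (∀ y, φ y ≤ φ a) → 0 < w a b → ∀ y, φ y ≤ φ b :=
    fun a b haO ha hab => by
      obtain ⟨hub, hvb⟩ := graphInfLap_neighbor_eq_of_lexMax (hw a) (hu a haO) (hv a haO) ha hab
      simpa only [φ, hub, hvb] using ha
  obtain ⟨z, hzO, hz⟩ := hconn.exists_mem hspread fun y => hx₀ y (mem_univ y)
  exact ⟨z, hzO, fun y => Prod.Lex.monotone_fst _ _ (hz y)⟩

end Comparison

theorem graphInfLap_comparison_general {V : Type*} [Fintype V] [Nonempty V]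
    (w : V → V → ℝ) (hw : ∀ x y, 0 ≤ w x y)
    (O : Finset V) (hO : O.Nonempty) (hconn : graphConnectedTo w O)
    (u v : V → ℝ)
    (hu : ∀ x : V, x ∉ O → graphInfLap w u x = 0)
    (hv : ∀ x : V, x ∉ O → graphInfLap w v x = 0) :
    (Finset.univ.sup' Finset.univ_nonempty (fun x => |u x - v x|) =
      O.sup' hO (fun x => |u x - v x|)) ∧
    ((∀ x ∈ O, u x = v x) → u = v) := by
  obtain ⟨z₁, hz₁, h₁⟩ := graphInfLap_exists_mem_forall_sub_le hw hconn hu hv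
  obtain ⟨z₂, hz₂, h₂⟩ := graphInfLap_exists_mem_forall_sub_le hw hconn hv hu
  have hle : ∀ z ∈ O, u z - v z ≤ O.sup' hO (fun x => |u x - v x|) ∧
      v z - u z ≤ O.sup' hO (fun x => |u x - v x|) :=
    fun z hz => abs_sub_le_iff.1 (le_sup' (fun x => |u x - v x|) hz)
  have hsup : univ.sup' univ_nonempty (fun x => |u x - v x|) = O.sup' hO (fun x => |u x - v x|) :=
    le_antisymm
      (sup'_le _ _ fun y _ => abs_sub_le_iff.2
        ⟨(h₁ y).trans (hle z₁ hz₁).1, (h₂ y).trans (hle z₂ hz₂).2⟩)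
      (sup'_mono _ (subset_univ O) hO)
  refine ⟨hsup, fun hbd => funext fun x => sub_eq_zero.1 (abs_nonpos_iff.1 ?_)⟩
  calc |u x - v x| ≤ univ.sup' univ_nonempty (fun x => |u x - v x|) :=
        le_sup' (fun x => |u x - v x|) (mem_univ x)
    _ = O.sup' hO (fun x => |u x - v x|) := hsup
    _ ≤ 0 := sup'_le _ _ fun y hy => by simp [hbd y hy]

/-- Comparison/uniqueness for the graph ∞-Laplacian: two graph ∞-harmonic functions differ
at most as much as they differ on the boundary set; in particular solutions with prescribed
boundary values are unique. -/
theorem graphInfLap_comparison {V : Type*} [Fintype V] [Nonempty V]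
    (w : V → V → ℝ) (hw : ∀ x y, 0 ≤ w x y) (hsym : ∀ x y, w x y = w y x)
    (O : Finset V) (hO : O.Nonempty) (hconn : graphConnectedTo w O)
    (u v : V → ℝ)
    (hu : ∀ x : V, x ∉ O → graphInfLap w u x = 0)
    (hv : ∀ x : V, x ∉ O → graphInfLap w v x = 0) :
    (Finset.univ.sup' Finset.univ_nonempty (fun x => |u x - v x|) =
      O.sup' hO (fun x => |u x - v x|)) ∧
    ((∀ x ∈ O, u x = v x) → u = v) :=
  graphInfLap_comparison_general w hw O hO hconn u v hu hv
end

section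
/- A priori bound for graph ∞-harmonic functions: under the same connectivity hypotheses, if u : X → ℝ satisfies L u(x) = 0 for all x ∈ X \ O and u = g on O, then min_O g ≤ u(x) ≤ max_O g for every x ∈ X. -/
/-
Maximum principle. At an interior maximum point `x` of `u` every term `w x y * (u y - u x)`
is nonpositive, so the maximum in `L u x` is `≤ 0`; since `L u x = 0` and the minimum is
at most the maximum, the minimum is `0` as well, and hence `u y = u x` whenever `w x y > 0`.
The maximum value therefore travels along a path of positive weights until the path reaches
`O`, where `u = g`. The lower bound is the upper bound for `-u`, since `L (-u) = -L u`.
-/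

open Finset

theorem Finset.sup'_neg_eq_neg_inf' {ι α : Type*} [AddCommGroup α] [LinearOrder α]
    [IsOrderedAddMonoid α] (s : Finset ι) (hs : s.Nonempty) (f : ι → α) :
    s.sup' hs (fun i => -f i) = -s.inf' hs f :=
  le_antisymm (sup'_le _ _ fun _ hi => neg_le_neg (inf'_le f hi))
    (neg_le.mp (le_inf' _ _ fun _ hi => neg_le.mp (le_sup' (fun i => -f i) hi)))

theorem Finset.inf'_neg_eq_neg_sup' {ι α : Type*} [AddCommGroup α] [LinearOrder α]
    [IsOrderedAddMonoid α] (s : Finset ι) (hs : s.Nonempty) (f : ι → α) :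
    s.inf' hs (fun i => -f i) = -s.sup' hs f := by
  have h := s.sup'_neg_eq_neg_inf' hs (fun i => -f i)
  simp only [neg_neg] at h
  rw [h, neg_neg]

section

variable {V : Type*} [Fintype V] [Nonempty V] {w : V → V → ℝ}

theorem graphInfLap_neg (u : V → ℝ) (x : V) :
    graphInfLap w (fun y => -u y) x = -graphInfLap w u x := by
  have h : (fun y => w x y * (-u y - -u x)) = fun y => -(w x y * (u y - u x)) := by
    funext y; ring
  rw [graphInfLap, graphInfLap, h, sup'_neg_eq_neg_inf', inf'_neg_eq_neg_sup']
  ring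

theorem eq_of_graphInfLap_eq_zero_of_forall_le {u : V → ℝ} {x y : V}
    (hw : ∀ z, 0 ≤ w x z) (hmax : ∀ z, u z ≤ u x) (hL : graphInfLap w u x = 0)
    (hxy : 0 < w x y) : u y = u x := by
  set f := fun z => w x z * (u z - u x)
  have hsup : univ.sup' univ_nonempty f ≤ 0 :=
    sup'_le _ _ fun z _ => mul_nonpos_of_nonneg_of_nonpos (hw z) (sub_nonpos.mpr (hmax z))
  obtain ⟨z⟩ := ‹Nonempty V›
  have hinf_le_sup : univ.inf' univ_nonempty f ≤ univ.sup' univ_nonempty f :=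
    (inf'_le f (mem_univ z)).trans (le_sup' f (mem_univ z))
  have hinf : 0 ≤ univ.inf' univ_nonempty f := by
    rw [graphInfLap] at hL
    linarith
  have hfy : 0 ≤ w x y * (u y - u x) := hinf.trans (inf'_le f (mem_univ y))
  linarith [hmax y, nonneg_of_mul_nonneg_right hfy hxy]

theorem exists_mem_forall_le_of_graphInfLap_eq_zero (hw : ∀ x y, 0 ≤ w x y) {O : Finset V}
    (hconn : graphConnectedTo w O) {u : V → ℝ} (hu : ∀ x, x ∉ O → graphInfLap w u x = 0) :
    ∃ z ∈ O, ∀ y, u y ≤ u z := by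
  have reach : ∀ a b, Relation.ReflTransGen (fun a b => 0 < w a b) a b → b ∈ O →
      (∀ y, u y ≤ u a) → ∃ z ∈ O, ∀ y, u y ≤ u z := by
    intro a b hab hb
    induction hab using Relation.ReflTransGen.head_induction_on with
    | refl => exact fun hmax => ⟨b, hb, hmax⟩
    | @head a c hac _ ih =>
      intro hmax
      by_cases ha : a ∈ O
      · exact ⟨a, ha, hmax⟩
      · have hca := eq_of_graphInfLap_eq_zero_of_forall_le (hw a) hmax (hu a ha) hac
        exact ih (hca ▸ hmax)
  obtain ⟨x, hx⟩ := Finite.exists_max u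
  by_cases hxO : x ∈ O
  · exact ⟨x, hxO, hx⟩
  · obtain ⟨b, hb, hxb⟩ := hconn x hxO
    exact reach x b hxb hb hx

theorem le_sup'_of_graphInfLap_eq_zero (hw : ∀ x y, 0 ≤ w x y) {O : Finset V}
    (hO : O.Nonempty) (hconn : graphConnectedTo w O) {u g : V → ℝ}
    (hu : ∀ x, x ∉ O → graphInfLap w u x = 0) (hbc : ∀ x ∈ O, u x = g x) (x : V) :
    u x ≤ O.sup' hO g := by
  obtain ⟨z, hz, hmax⟩ := exists_mem_forall_le_of_graphInfLap_eq_zero hw hconn hu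
  calc u x ≤ u z := hmax x
    _ = g z := hbc z hz
    _ ≤ O.sup' hO g := le_sup' g hz

end

theorem graphInfLap_apriori_bound_general {V : Type*} [Fintype V] [Nonempty V]
    (w : V → V → ℝ) (hw : ∀ x y, 0 ≤ w x y)
    (O : Finset V) (hO : O.Nonempty) (hconn : graphConnectedTo w O)
    (u g : V → ℝ)
    (hu : ∀ x : V, x ∉ O → graphInfLap w u x = 0)
    (hbc : ∀ x ∈ O, u x = g x) :
    ∀ x : V, O.inf' hO g ≤ u x ∧ u x ≤ O.sup' hO g := by
  intro x
  have hu_neg : ∀ x, x ∉ O → graphInfLap w (fun y => -u y) x = 0 := fun x hx => by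
    rw [graphInfLap_neg, hu x hx, neg_zero]
  have hlower := le_sup'_of_graphInfLap_eq_zero hw hO hconn hu_neg
    (fun x hx => congrArg Neg.neg (hbc x hx)) x
  rw [sup'_neg_eq_neg_inf'] at hlower
  exact ⟨neg_le_neg_iff.mp hlower, le_sup'_of_graphInfLap_eq_zero hw hO hconn hu hbc x⟩

/-- A priori bound: a graph ∞-harmonic function with boundary data `g` on `O` is bounded
between the min and max of `g` over `O`. -/
theorem graphInfLap_apriori_bound {V : Type*} [Fintype V] [Nonempty V]
    (w : V → V → ℝ) (hw : ∀ x y, 0 ≤ w x y) (hsym : ∀ x y, w x y = w y x)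
    (O : Finset V) (hO : O.Nonempty) (hconn : graphConnectedTo w O)
    (u g : V → ℝ)
    (hu : ∀ x : V, x ∉ O → graphInfLap w u x = 0)
    (hbc : ∀ x ∈ O, u x = g x) :
    ∀ x : V, O.inf' hO g ≤ u x ∧ u x ≤ O.sup' hO g :=
  graphInfLap_apriori_bound_general w hw O hO hconn u g hu hbc
end

section
/- In the proof of the graph maximum principle, the following local dichotomy holds: suppose L u(x) = 0 = L v(x) at a point x where u − v attains its maximum over X, and set A = max_{y∈X} w(x,y)(u(x) − u(y)) and B = min_{y∈X} w(x,y)(u(x) − u(y)). Then A = max_{y∈X} w(x,y)(v(x) − v(y)), B = min_{y∈X} w(x,y)(v(x) − v(y)), and A + B = 0. -/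
open Finset

lemma my_sup'_neg {V : Type*} (s : Finset V) (h : s.Nonempty) (f : V → ℝ) :
    s.sup' h (fun y => -f y) = - s.inf' h f := by
  apply le_antisymm
  · exact Finset.sup'_le _ _ fun y hy => neg_le_neg (Finset.inf'_le _ hy)
  · rw [neg_le]
    exact Finset.le_inf' _ _ fun y hy => neg_le.2 (Finset.le_sup' (fun y => -f y) hy)

lemma my_inf'_neg {V : Type*} (s : Finset V) (h : s.Nonempty) (f : V → ℝ) :
    s.inf' h (fun y => -f y) = - s.sup' h f := by
  apply le_antisymm
  · exact le_neg.2 (Finset.sup'_le _ _ fun y hy => le_neg.2 (Finset.inf'_le (fun z => -f z) hy))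
  · exact Finset.le_inf' _ _ fun y hy => neg_le_neg (Finset.le_sup' _ hy)

/-- Local dichotomy at a maximum point of `u - v`: if `L u x = 0 = L v x` at a point `x`
where `u - v` attains its maximum, then the max and min of `w(x,y)(u(x)-u(y))` agree with
those for `v`, and they sum to zero. -/
theorem graphInfLap_local_dichotomy {V : Type*} [Fintype V] [Nonempty V]
    (w : V → V → ℝ) (hw : ∀ x y, 0 ≤ w x y)
    (u v : V → ℝ) (x : V)
    (hmax : ∀ y : V, u y - v y ≤ u x - v x)
    (hu : graphInfLap w u x = 0) (hv : graphInfLap w v x = 0) :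
    (Finset.univ.sup' Finset.univ_nonempty (fun y => w x y * (u x - u y)) =
      Finset.univ.sup' Finset.univ_nonempty (fun y => w x y * (v x - v y))) ∧
    (Finset.univ.inf' Finset.univ_nonempty (fun y => w x y * (u x - u y)) =
      Finset.univ.inf' Finset.univ_nonempty (fun y => w x y * (v x - v y))) ∧
    (Finset.univ.sup' Finset.univ_nonempty (fun y => w x y * (u x - u y)) +
      Finset.univ.inf' Finset.univ_nonempty (fun y => w x y * (u x - u y)) = 0) := by
  classical
  unfold graphInfLap at hu hv
  set Su := Finset.univ.sup' Finset.univ_nonempty (fun y => w x y * (u y - u x)) with hSu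
  set Iu := Finset.univ.inf' Finset.univ_nonempty (fun y => w x y * (u y - u x)) with hIu
  set Sv := Finset.univ.sup' Finset.univ_nonempty (fun y => w x y * (v y - v x)) with hSv
  set Iv := Finset.univ.inf' Finset.univ_nonempty (fun y => w x y * (v y - v x)) with hIv
  -- rewrite the goal's sup/inf in terms of Su, Iu, Sv, Iv
  have e1 : Finset.univ.sup' Finset.univ_nonempty (fun y => w x y * (u x - u y)) = -Iu := by
    rw [hIu, ← my_sup'_neg]
    congr 1; funext y; ring
  have e2 : Finset.univ.inf' Finset.univ_nonempty (fun y => w x y * (u x - u y)) = -Su := by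
    rw [hSu, ← my_inf'_neg]
    congr 1; funext y; ring
  have e3 : Finset.univ.sup' Finset.univ_nonempty (fun y => w x y * (v x - v y)) = -Iv := by
    rw [hIv, ← my_sup'_neg]
    congr 1; funext y; ring
  have e4 : Finset.univ.inf' Finset.univ_nonempty (fun y => w x y * (v x - v y)) = -Sv := by
    rw [hSv, ← my_inf'_neg]
    congr 1; funext y; ring
  have hpt' : ∀ y, w x y * (u y - u x) ≤ w x y * (v y - v x) := fun y =>
    mul_le_mul_of_nonneg_left (by linarith [hmax y]) (hw x y)
  have hSle : Su ≤ Sv := by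
    rw [hSu, hSv]
    exact Finset.sup'_le _ _ fun y hy => le_trans (hpt' y) (Finset.le_sup' (fun z => w x z * (v z - v x)) hy)
  have hIle : Iu ≤ Iv := by
    rw [hIu, hIv]
    exact Finset.le_inf' _ _ fun y hy => le_trans (Finset.inf'_le (fun z => w x z * (u z - u x)) hy) (hpt' y)
  have hSge : Sv ≤ Su := by linarith
  have hIeq : Iu = Iv := by linarith
  refine ⟨by rw [e1, e3, hIeq], by rw [e2, e4]; linarith, by rw [e1, e2]; linarith⟩
end

section
/- Almost sure decay of fill distance: with Y₁,…,Y_n i.i.d. on 𝕋^d with density bounded below by γ > 0 and r_n the fill distance as above, if h_n → 0 satisfies n h_n^{3d/2} / log n → ∞, then r_n² / h_n³ → 0 almost surely as n → ∞. -/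
/-!
Cover the torus by a grid with spacing at most `t/4`. If the fill distance of the first `n`
samples is at least `t`, some grid ball of radius `t/2` contains none of them; such a ball has
`μ`-mass at least `γ tᵈ`, so by independence and a union bound over the `≤ (5/t)ᵈ` grid points,
`P(r_n ≥ t) ≤ (5/t)ᵈ exp(-γ n tᵈ)`. For `t_n² = δ h_n³` the rate hypothesis makes `n t_nᵈ` exceed
any multiple of `log n`, so this bound is `O(n⁻²)`, and Borel–Cantelli gives `r_n² < δ h_n³`
eventually, almost surely, for every `δ > 0`.
-/

open MeasureTheory ProbabilityTheory Filter Metric Set Real Topology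
open scoped ENNReal NNReal

noncomputable def fillDistance {X : Type*} [PseudoMetricSpace X] (s : Set X) : ℝ :=
  ⨆ x, infDist x s

lemma exists_disjoint_ball_of_add_lt_fillDistance {X : Type*} [PseudoMetricSpace X] [Nonempty X]
    {G : Set X} {ε ρ : ℝ} (hG : ∀ x, ∃ g ∈ G, dist x g ≤ ε) {s : Set X}
    (hs : ε + ρ < fillDistance s) : ∃ g ∈ G, Disjoint (ball g ρ) s := by
  obtain ⟨x, hx⟩ := exists_lt_of_lt_ciSup hs
  obtain ⟨g, hgG, hxg⟩ := hG x
  refine ⟨g, hgG, Set.disjoint_left.2 fun y hy hys => ?_⟩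
  have hxy := infDist_le_dist_of_mem (x := x) hys
  have htri := dist_triangle x g y
  rw [mem_ball'] at hy
  linarith

lemma AddCircle.exists_dist_natCast_div_le {m : ℕ} (hm : 0 < m) (y : AddCircle (1 : ℝ)) :
    ∃ k : Fin m, dist y ((k / m : ℝ) : AddCircle (1 : ℝ)) ≤ 1 / m := by
  obtain ⟨x, rfl⟩ := QuotientAddGroup.mk_surjective y
  have hm' : (0 : ℝ) < m := by exact_mod_cast hm
  rw [← AddCircle.coe_fract]
  set a := Int.fract x
  have ha : a < 1 := Int.fract_lt_one x
  have hk : ⌊a * m⌋₊ < m := (Nat.floor_lt (by positivity)).2 (by nlinarith)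
  refine ⟨⟨⌊a * m⌋₊, hk⟩, ?_⟩
  have h1 : (⌊a * m⌋₊ : ℝ) ≤ a * m := Nat.floor_le (by positivity)
  have h2 : a * m < ⌊a * m⌋₊ + 1 := Nat.lt_floor_add_one _
  calc dist (a : AddCircle (1 : ℝ)) _ = ‖((a - ⌊a * m⌋₊ / m : ℝ) : AddCircle (1 : ℝ))‖ := by
        rw [dist_eq_norm, AddCircle.coe_sub]
    _ ≤ |a - ⌊a * m⌋₊ / m| := QuotientAddGroup.norm_mk_le_norm
    _ ≤ 1 / m := by
        have e : a - ⌊a * m⌋₊ / m = (a * m - ⌊a * m⌋₊) / m := by field_simp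
        rw [e, abs_div, abs_of_pos hm', abs_of_nonneg (by linarith)]
        exact div_le_div_of_nonneg_right (by linarith) hm'.le

lemma exists_finset_card_le_forall_exists_dist_le (ι : Type*) [Fintype ι] {m : ℕ} (hm : 0 < m) :
    ∃ G : Finset (ι → AddCircle (1 : ℝ)), G.card ≤ m ^ Fintype.card ι ∧
      ∀ x, ∃ g ∈ G, dist x g ≤ 1 / m := by
  classical
  refine ⟨Finset.univ.image fun k : ι → Fin m => fun i => ((k i / m : ℝ) : AddCircle (1 : ℝ)),
    Finset.card_image_le.trans (by simp), fun x => ?_⟩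
  choose k hk using fun i => AddCircle.exists_dist_natCast_div_le hm (x i)
  exact ⟨_, Finset.mem_image_of_mem _ (Finset.mem_univ k), (dist_pi_le_iff (by positivity)).2 hk⟩

lemma volume_pi_ball_addCircle {ι : Type*} [Fintype ι] {T : ℝ} [Fact (0 < T)]
    (c : ι → AddCircle T) {ρ : ℝ} (hρ : 0 < ρ) :
    volume (ball c ρ) = ENNReal.ofReal (min T (2 * ρ)) ^ Fintype.card ι := by
  rw [volume_pi_ball c hρ, ← Finset.card_univ, ← Finset.prod_const]
  refine Finset.prod_congr rfl fun i _ => ?_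
  rw [← measure_congr AddCircle.closedBall_ae_eq_ball, AddCircle.volume_closedBall]

lemma ae_eventually_notMem_of_eventually_le {α : Type*} [MeasurableSpace α] {μ : Measure α}
    {s : ℕ → Set α} {p : ℕ → ℝ≥0∞} (hp : ∑' n, p n ≠ ∞) (hs : ∀ᶠ n in atTop, μ (s n) ≤ p n) :
    ∀ᵐ x ∂μ, ∀ᶠ n in atTop, x ∉ s n := by
  obtain ⟨N, hN⟩ := eventually_atTop.1 hs
  have htail : ∑' n, μ (s (n + N)) ≠ ∞ := ne_top_of_le_ne_top hp <|
    (ENNReal.tsum_le_tsum fun n => hN _ (Nat.le_add_left _ _)).trans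
      (ENNReal.tsum_comp_le_tsum_of_injective (add_left_injective N) p)
  filter_upwards [ae_eventually_notMem htail] with x hx
  rwa [← map_add_atTop_eq_nat N]

lemma ae_tendsto_zero_of_forall_ae_eventually_lt {α : Type*} [MeasurableSpace α]
    {μ : Measure α} {f : ℕ → α → ℝ} (hf : ∀ n x, 0 ≤ f n x)
    (h : ∀ δ : ℝ, 0 < δ → ∀ᵐ x ∂μ, ∀ᶠ n in atTop, f n x < δ) :
    ∀ᵐ x ∂μ, Tendsto (fun n => f n x) atTop (𝓝 0) := by
  filter_upwards [ae_all_iff.2 fun k : ℕ => h (1 / (k + 1)) Nat.one_div_pos_of_nat] with x hx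
  refine tendsto_order.2 ⟨fun a ha => .of_forall fun n => ha.trans_le (hf n x), fun a ha => ?_⟩
  obtain ⟨k, hk⟩ := exists_nat_one_div_lt ha
  exact (hx k).mono fun n hn => hn.trans hk

lemma eventually_inv_mul_exp_neg_le {s : ℕ → ℝ} (hs : ∀ n, 0 < s n) {c : ℝ} (hc : 0 < c)
    (hrate : Tendsto (fun n : ℕ => n * s n / log n) atTop atTop) :
    ∀ᶠ n : ℕ in atTop, (s n)⁻¹ * exp (-(n * (c * s n))) ≤ 1 / (n : ℝ) ^ 2 := by
  have hlog : ∀ᶠ n : ℕ in atTop, 1 ≤ log n :=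
    (tendsto_log_atTop.comp tendsto_natCast_atTop_atTop).eventually_ge_atTop 1
  filter_upwards [hlog, hrate.eventually_ge_atTop (max 1 (3 / c))] with n hlog hn
  have hn0 : (0 : ℝ) < n := by
    rcases n with _ | n
    · norm_num at hlog
    · positivity
  rw [le_div_iff₀ (by linarith)] at hn
  have h1 : log n ≤ n * s n := (le_mul_of_one_le_left (by linarith) (le_max_left _ _)).trans hn
  have h3 : 3 * log n ≤ n * (c * s n) := calc
    3 * log n = c * (3 / c * log n) := by field_simp
    _ ≤ c * (n * s n) := mul_le_mul_of_nonneg_left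
        ((mul_le_mul_of_nonneg_right (le_max_right _ _) (by linarith)).trans hn) hc.le
    _ = n * (c * s n) := by ring
  have hinv : (s n)⁻¹ ≤ n := by
    rw [inv_le_iff_one_le_mul₀ (hs n)]; linarith
  have hexp : exp (-(n * (c * s n))) ≤ ((n : ℝ) ^ 3)⁻¹ := by
    rw [← exp_log (pow_pos hn0 3), ← exp_neg, Real.log_pow]
    exact exp_le_exp.2 (by push_cast; linarith)
  calc (s n)⁻¹ * exp (-(n * (c * s n))) ≤ n * ((n : ℝ) ^ 3)⁻¹ :=
        mul_le_mul hinv hexp (exp_pos _).le hn0.le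
    _ = 1 / (n : ℝ) ^ 2 := by field_simp

section IID

variable {Ω E : Type*} [MeasurableSpace Ω] [MeasurableSpace E] {P : Measure Ω}
  [IsProbabilityMeasure P] {Y : ℕ → Ω → E} {μ : Measure E}

lemma measure_iInter_preimage_compl_le_exp (hmeas : ∀ i, Measurable (Y i))
    (hindep : iIndepFun Y P) (hid : ∀ i, P.map (Y i) = μ) {s : Set E} (hs : MeasurableSet s)
    {q : ℝ} (hq : 0 ≤ q) (hqs : ENNReal.ofReal q ≤ μ s) (n : ℕ) :
    P (⋂ i ∈ Finset.range n, Y i ⁻¹' sᶜ) ≤ ENNReal.ofReal (exp (-(n * q))) := by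
  have : IsProbabilityMeasure μ := hid 0 ▸ Measure.isProbabilityMeasure_map (hmeas 0).aemeasurable
  have hcompl : μ sᶜ ≤ ENNReal.ofReal (exp (-q)) := calc
    μ sᶜ = 1 - μ s := prob_compl_eq_one_sub hs
    _ ≤ 1 - ENNReal.ofReal q := tsub_le_tsub_left hqs 1
    _ = ENNReal.ofReal (1 - q) := by rw [← ENNReal.ofReal_one, ENNReal.ofReal_sub _ hq]
    _ ≤ ENNReal.ofReal (exp (-q)) := ENNReal.ofReal_le_ofReal (by linarith [add_one_le_exp (-q)])
  calc P (⋂ i ∈ Finset.range n, Y i ⁻¹' sᶜ) = ∏ i ∈ Finset.range n, P (Y i ⁻¹' sᶜ) :=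
        hindep.measure_inter_preimage_eq_mul _ fun _ _ => hs.compl
    _ = μ sᶜ ^ n := by
        simp_rw [← Measure.map_apply (hmeas _) hs.compl, hid,
          Finset.prod_const, Finset.card_range]
    _ ≤ ENNReal.ofReal (exp (-q)) ^ n := by gcongr
    _ = ENNReal.ofReal (exp (-(n * q))) := by
        rw [← ENNReal.ofReal_pow (exp_pos _).le, ← exp_nat_mul, mul_neg]

end IID

section Torus

variable {d : ℕ} {Ω : Type*} [MeasurableSpace Ω] {P : Measure Ω} [IsProbabilityMeasure P]
  {Y : ℕ → Ω → (Fin d → AddCircle (1 : ℝ))} {μ : Measure (Fin d → AddCircle (1 : ℝ))} {γ : ℝ≥0}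

lemma measure_le_fillDistance_le (hmeas : ∀ i, Measurable (Y i)) (hindep : iIndepFun Y P)
    (hid : ∀ i, P.map (Y i) = μ) (hlb : γ • (volume : Measure (Fin d → AddCircle (1 : ℝ))) ≤ μ)
    {t : ℝ} (ht : 0 < t) (ht1 : t ≤ 1) (n : ℕ) :
    P {ω | t ≤ fillDistance ((fun i => Y i ω) '' Iio n)}
      ≤ ENNReal.ofReal ((5 / t) ^ d * exp (-(n * (γ * t ^ d)))) := by
  set m := ⌈4 / t⌉₊
  have hm : 0 < m := Nat.ceil_pos.2 (by positivity)
  have hmt : 1 / (m : ℝ) ≤ t / 4 := by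
    rw [one_div_le (by positivity) (by positivity), div_div_eq_mul_div, one_mul]
    exact Nat.le_ceil _
  have hm5 : (m : ℝ) ≤ 5 / t := by
    have : 4 / t + 1 ≤ 5 / t := by
      rw [show 5 / t = 4 / t + 1 / t by ring]; gcongr; exact one_le_one_div ht ht1
    exact (Nat.ceil_lt_add_one (by positivity)).le.trans this
  obtain ⟨G, hcard, hG⟩ := exists_finset_card_le_forall_exists_dist_le (Fin d) hm
  have hball : ∀ g, ENNReal.ofReal (γ * t ^ d) ≤ μ (ball g (t / 2)) := fun g => calc
    ENNReal.ofReal (γ * t ^ d) = γ • volume (ball g (t / 2)) := by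
        rw [volume_pi_ball_addCircle _ (by positivity), mul_div_cancel₀ _ two_ne_zero,
          min_eq_right ht1, Fintype.card_fin, ENNReal.ofReal_mul (by positivity),
          ENNReal.ofReal_pow ht.le, ENNReal.ofReal_coe_nnreal, ENNReal.smul_def, smul_eq_mul]
    _ ≤ μ (ball g (t / 2)) := hlb _
  have hsub : {ω | t ≤ fillDistance ((fun i => Y i ω) '' Iio n)}
      ⊆ ⋃ g ∈ G, ⋂ i ∈ Finset.range n, Y i ⁻¹' (ball g (t / 2))ᶜ := by
    intro ω hω
    obtain ⟨g, hgG, hdisj⟩ := exists_disjoint_ball_of_add_lt_fillDistance (G := (G : Set _))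
      (ε := t / 4) (ρ := t / 2) (fun x => (hG x).imp fun g hg => ⟨hg.1, hg.2.trans hmt⟩)
      (lt_of_lt_of_le (by linarith) hω)
    simp only [mem_iUnion₂, mem_iInter₂, Finset.mem_range, mem_preimage, mem_compl_iff]
    exact ⟨g, hgG, fun i hi hY => Set.disjoint_left.1 hdisj hY (mem_image_of_mem _ hi)⟩
  calc P {ω | t ≤ fillDistance ((fun i => Y i ω) '' Iio n)}
      ≤ ∑ g ∈ G, P (⋂ i ∈ Finset.range n, Y i ⁻¹' (ball g (t / 2))ᶜ) :=
        (measure_mono hsub).trans (measure_biUnion_finset_le _ _)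
    _ ≤ ∑ g ∈ G, ENNReal.ofReal (exp (-(n * (γ * t ^ d)))) := Finset.sum_le_sum fun g _ =>
        measure_iInter_preimage_compl_le_exp hmeas hindep hid measurableSet_ball (by positivity)
          (hball g) n
    _ = ENNReal.ofReal G.card * ENNReal.ofReal (exp (-(n * (γ * t ^ d)))) := by
        rw [Finset.sum_const, nsmul_eq_mul, ENNReal.ofReal_natCast]
    _ ≤ ENNReal.ofReal ((5 / t) ^ d) * ENNReal.ofReal (exp (-(n * (γ * t ^ d)))) := by
        gcongr
        calc (G.card : ℝ) ≤ (m : ℝ) ^ d := by exact_mod_cast hcard.trans_eq (by simp)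
          _ ≤ (5 / t) ^ d := by gcongr
    _ = ENNReal.ofReal ((5 / t) ^ d * exp (-(n * (γ * t ^ d)))) :=
        (ENNReal.ofReal_mul (by positivity)).symm

lemma ae_eventually_fillDistance_lt (hmeas : ∀ i, Measurable (Y i)) (hindep : iIndepFun Y P)
    (hid : ∀ i, P.map (Y i) = μ) (hγ : 0 < γ)
    (hlb : γ • (volume : Measure (Fin d → AddCircle (1 : ℝ))) ≤ μ)
    {t : ℕ → ℝ} (ht : ∀ n, 0 < t n) (ht1 : ∀ᶠ n in atTop, t n ≤ 1)
    (hrate : Tendsto (fun n : ℕ => n * t n ^ d / log n) atTop atTop) :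
    ∀ᵐ ω ∂P, ∀ᶠ n in atTop, fillDistance ((fun i => Y i ω) '' Iio n) < t n := by
  have hsum : ∑' n : ℕ, ENNReal.ofReal (5 ^ d * (1 / (n : ℝ) ^ 2)) ≠ ∞ := by
    rw [← ENNReal.ofReal_tsum_of_nonneg (fun n => by positivity)
      ((summable_one_div_nat_pow.2 one_lt_two).mul_left _)]
    exact ENNReal.ofReal_ne_top
  have hbound : ∀ᶠ n in atTop, P {ω | t n ≤ fillDistance ((fun i => Y i ω) '' Iio n)}
      ≤ ENNReal.ofReal (5 ^ d * (1 / (n : ℝ) ^ 2)) := by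
    filter_upwards [ht1, eventually_inv_mul_exp_neg_le (fun n => pow_pos (ht n) d)
      (NNReal.coe_pos.2 hγ) hrate] with n hn1 hn
    refine (measure_le_fillDistance_le hmeas hindep hid hlb (ht n) hn1 n).trans
      (ENNReal.ofReal_le_ofReal ?_)
    rw [div_pow, div_eq_mul_inv, mul_assoc]
    gcongr
  filter_upwards [ae_eventually_notMem_of_eventually_le hsum hbound] with ω hω
  filter_upwards [hω] with n hn
  exact not_le.1 hn

end Torus

theorem fill_distance_as_decay_general (d : ℕ)
    {Ω : Type*} [MeasurableSpace Ω] (P : Measure Ω) [IsProbabilityMeasure P]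
    (Y : ℕ → Ω → (Fin d → AddCircle (1 : ℝ)))
    (hmeas : ∀ i, Measurable (Y i))
    (hindep : iIndepFun Y P)
    (μ : Measure (Fin d → AddCircle (1 : ℝ)))
    (hid : ∀ i, P.map (Y i) = μ)
    (γ : NNReal) (hγ : 0 < γ) (hlb : γ • (volume : Measure (Fin d → AddCircle (1 : ℝ))) ≤ μ)
    (h : ℕ → ℝ) (hpos : ∀ n, 0 < h n)
    (hto0 : Tendsto h atTop (nhds 0))
    (hrate : Tendsto (fun n : ℕ => (n : ℝ) * (h n) ^ ((3 * (d : ℝ)) / 2) / Real.log n)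
      atTop atTop) :
    ∀ᵐ ω ∂P, Tendsto
      (fun n : ℕ =>
        (⨆ x : Fin d → AddCircle (1 : ℝ),
          Metric.infDist x ((fun i => Y i ω) '' Set.Iio n)) ^ 2 / (h n) ^ 3)
      atTop (nhds 0) := by
  refine ae_tendsto_zero_of_forall_ae_eventually_lt
    (fun n ω => div_nonneg (sq_nonneg _) (pow_pos (hpos n) 3).le) fun δ hδ => ?_
  have hδh : ∀ n, 0 < δ * h n ^ 3 := fun n => mul_pos hδ (pow_pos (hpos n) 3)
  have ht1 : ∀ᶠ n in atTop, √(δ * h n ^ 3) ≤ 1 := by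
    have : Tendsto (fun n => √(δ * h n ^ 3)) atTop (𝓝 0) := by
      simpa using ((hto0.pow 3).const_mul δ).sqrt
    exact this.eventually (eventually_le_nhds one_pos)
  have htd : ∀ n, √(δ * h n ^ 3) ^ d = δ ^ ((d : ℝ) / 2) * h n ^ (3 * (d : ℝ) / 2) := fun n => by
    rw [sqrt_eq_rpow, ← rpow_natCast, ← rpow_mul (hδh n).le, mul_rpow hδ.le (pow_pos (hpos n) 3).le,
      ← rpow_natCast (h n) 3, ← rpow_mul (hpos n).le]
    ring_nf
  have hrate' : Tendsto (fun n : ℕ => n * √(δ * h n ^ 3) ^ d / log n) atTop atTop :=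
    (hrate.const_mul_atTop (rpow_pos_of_pos hδ ((d : ℝ) / 2))).congr fun n => by rw [htd]; ring
  filter_upwards [ae_eventually_fillDistance_lt hmeas hindep hid hγ hlb
    (fun n => sqrt_pos.2 (hδh n)) ht1 hrate'] with ω hω
  filter_upwards [hω] with n hn
  rw [div_lt_iff₀ (pow_pos (hpos n) 3), ← sq_sqrt (hδh n).le]
  exact pow_lt_pow_left₀ hn (Real.iSup_nonneg fun _ => infDist_nonneg) two_ne_zero

/-- Almost sure decay of the fill distance: if `Y₁, Y₂, …` are i.i.d. on the `d`-dimensional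
torus with law `μ` whose density is bounded below by `γ > 0`, `r_n` is the fill distance of
the first `n` sample points, and `h_n → 0` with `n h_n^{3d/2} / log n → ∞`, then
`r_n² / h_n³ → 0` almost surely. -/
theorem fill_distance_as_decay (d : ℕ) (hd : 0 < d)
    {Ω : Type*} [MeasurableSpace Ω] (P : Measure Ω) [IsProbabilityMeasure P]
    (Y : ℕ → Ω → (Fin d → AddCircle (1 : ℝ)))
    (hmeas : ∀ i, Measurable (Y i))
    (hindep : iIndepFun Y P)
    (μ : Measure (Fin d → AddCircle (1 : ℝ)))
    (hid : ∀ i, P.map (Y i) = μ)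
    (γ : NNReal) (hγ : 0 < γ) (hlb : γ • (volume : Measure (Fin d → AddCircle (1 : ℝ))) ≤ μ)
    (h : ℕ → ℝ) (hpos : ∀ n, 0 < h n)
    (hto0 : Tendsto h atTop (nhds 0))
    (hrate : Tendsto (fun n : ℕ => (n : ℝ) * (h n) ^ ((3 * (d : ℝ)) / 2) / Real.log n)
      atTop atTop) :
    ∀ᵐ ω ∂P, Tendsto
      (fun n : ℕ =>
        (⨆ x : Fin d → AddCircle (1 : ℝ),
          Metric.infDist x ((fun i => Y i ω) '' Set.Iio n)) ^ 2 / (h n) ^ 3)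
      atTop (nhds 0) :=
  fill_distance_as_decay_general d P Y hmeas hindep μ hid γ hγ hlb h hpos hto0 hrate
end

section
/- Explicit solution of the 1D weighted ∞-Laplacian Dirichlet problem: with f the piecewise constant density equal to A on δ ≤ |x| ≤ 1 and μA on |x| < δ (0 < μ, δ < 1), boundary labels u(−x₁) = −1 and u(x₂) = 1 with x₁, x₂ ∈ [δ, 1], the function u_α defined piecewise by u_α(x) = −1 on [−1,−x₁]; u_α(x) = m(x + x₁) − 1 on [−x₁, −δ]; u_α(x) = μ^{−2α} m (x + δ + μ^{2α}(x₁ − δ)) − 1 on [−δ, δ]; u_α(x) = m(x − x₂) + 1 on [δ, x₂]; u_α(x) = 1 on [x₂, 1], where m = 2/(x₁ + x₂ − 2δ + 2δ μ^{−2α}), is continuous on [−1,1], satisfies u_α(−x₁) = −1, u_α(x₂) = 1, and the quantity f(x)^{2α}|u_α′(x)| is constant and equal on each of the three intervals (−x₁,−δ), (−δ,δ), (δ,x₂). -/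
/-- The explicit piecewise affine candidate solution of the 1D weighted ∞-Laplacian
Dirichlet problem. -/
noncomputable def ualpha (μ δ x₁ x₂ α m : ℝ) : ℝ → ℝ := fun x =>
  if x ≤ -x₁ then -1
  else if x ≤ -δ then m * (x + x₁) - 1
  else if x ≤ δ then
    Real.rpow μ (-(2 * α)) * m * (x + δ + Real.rpow μ (2 * α) * (x₁ - δ)) - 1
  else if x ≤ x₂ then m * (x - x₂) + 1
  else 1

/-- Explicit solution of the 1D weighted ∞-Laplacian Dirichlet problem: `u_α` is continuous
on `[−1,1]`, takes the boundary values `−1` at `−x₁` and `1` at `x₂`, is affine with slope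
`m` on `(−x₁,−δ)` and `(δ,x₂)` and slope `μ^{−2α} m` on `(−δ,δ)`, and the weighted gradient
`f^{2α}|u_α′|` is equal across the three intervals. -/
theorem ualpha_solves_weighted_infty_laplacian
    (μ δ x₁ x₂ α A : ℝ)
    (hμ : 0 < μ) (hμ1 : μ < 1) (hδ : 0 < δ) (hδ1 : δ < 1)
    (hx₁ : δ ≤ x₁) (hx₁1 : x₁ ≤ 1) (hx₂ : δ ≤ x₂) (hx₂1 : x₂ ≤ 1) (hA : 0 < A)
    (m : ℝ) (hm : m = 2 / (x₁ + x₂ - 2 * δ + 2 * δ * Real.rpow μ (-(2 * α)))) :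
    ContinuousOn (ualpha μ δ x₁ x₂ α m) (Set.Icc (-1) 1) ∧
    ualpha μ δ x₁ x₂ α m (-x₁) = -1 ∧
    ualpha μ δ x₁ x₂ α m x₂ = 1 ∧
    (∀ x ∈ Set.Ioo (-x₁) (-δ), HasDerivAt (ualpha μ δ x₁ x₂ α m) m x) ∧
    (∀ x ∈ Set.Ioo (-δ) δ,
      HasDerivAt (ualpha μ δ x₁ x₂ α m) (Real.rpow μ (-(2 * α)) * m) x) ∧
    (∀ x ∈ Set.Ioo δ x₂, HasDerivAt (ualpha μ δ x₁ x₂ α m) m x) ∧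
    Real.rpow A (2 * α) * |m| =
      Real.rpow (μ * A) (2 * α) * |Real.rpow μ (-(2 * α)) * m| := by
  have hμ2 : (0:ℝ) < Real.rpow μ (-(2*α)) := Real.rpow_pos_of_pos hμ _
  have hμ3 : Real.rpow μ (-(2*α)) * Real.rpow μ (2*α) = 1 := by
    show μ ^ (-(2*α)) * μ ^ (2*α) = 1
    rw [← Real.rpow_add hμ]; simp
  have hD : 0 < x₁ + x₂ - 2*δ + 2*δ*Real.rpow μ (-(2*α)) := by nlinarith
  have hmD : m * (x₁ + x₂ - 2*δ + 2*δ*Real.rpow μ (-(2*α))) = 2 := by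
    rw [hm]; exact div_mul_cancel₀ 2 hD.ne'
  have key : ∀ (a b : ℝ) (s : Set ℝ), IsOpen s →
      (∀ y ∈ s, ualpha μ δ x₁ x₂ α m y = a * y + b) →
      ∀ x ∈ s, HasDerivAt (ualpha μ δ x₁ x₂ α m) a x := by
    intro a b s hs hval x hx
    have h1 : HasDerivAt (fun y : ℝ => a * y + b) a x := by
      simpa using ((hasDerivAt_id x).const_mul a).add_const b
    exact h1.congr_of_eventuallyEq (Filter.eventually_of_mem (hs.mem_nhds hx) hval)
  refine ⟨?_, ?_, ?_, ?_, ?_, ?_, ?_⟩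
  · -- continuity
    apply Continuous.continuousOn
    unfold ualpha
    apply Continuous.if_le _ _ continuous_id continuous_const
    · intro x hx
      simp only [id_eq] at hx
      subst hx
      rw [if_pos (by linarith : -x₁ ≤ -δ)]
      ring
    · exact continuous_const
    · apply Continuous.if_le _ _ continuous_id continuous_const
      · intro x hx
        simp only [id_eq] at hx
        subst hx
        rw [if_pos (by linarith : -δ ≤ δ)]
        linear_combination (-(m*(x₁-δ))) * hμ3
      · fun_prop
      · apply Continuous.if_le _ _ continuous_id continuous_const
        · intro x hx
          simp only [id_eq] at hx
          rw [hx]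
          rw [if_pos hx₂]
          linear_combination m*(x₁-δ) * hμ3 + hmD
        · fun_prop
        · apply Continuous.if_le _ _ continuous_id continuous_const
          · intro x hx; simp only [id_eq] at hx; subst hx; ring
          · fun_prop
          · exact continuous_const
  · unfold ualpha; rw [if_pos le_rfl]
  · unfold ualpha
    rw [if_neg (by linarith : ¬ x₂ ≤ -x₁), if_neg (by linarith : ¬ x₂ ≤ -δ)]
    by_cases h : x₂ ≤ δ
    · have hx : x₂ = δ := le_antisymm h hx₂
      subst hx
      rw [if_pos le_rfl]
      linear_combination m*(x₁-x₂) * hμ3 + hmD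
    · rw [if_neg h, if_pos le_rfl]; ring
  · refine key m (m*x₁ - 1) _ isOpen_Ioo ?_
    rintro y ⟨h1, h2⟩
    unfold ualpha
    rw [if_neg (not_le.2 h1), if_pos h2.le]
    ring
  · refine key (Real.rpow μ (-(2*α)) * m)
      (Real.rpow μ (-(2*α)) * m * (δ + Real.rpow μ (2*α) * (x₁ - δ)) - 1) _ isOpen_Ioo ?_
    rintro y ⟨h1, h2⟩
    unfold ualpha
    rw [if_neg (by linarith : ¬ y ≤ -x₁), if_neg (not_le.2 h1), if_pos h2.le]
    ring
  · refine key m (-(m*x₂) + 1) _ isOpen_Ioo ?_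
    rintro y ⟨h1, h2⟩
    unfold ualpha
    rw [if_neg (by linarith : ¬ y ≤ -x₁), if_neg (by linarith : ¬ y ≤ -δ),
      if_neg (not_le.2 h1), if_pos h2.le]
    ring
  · show A ^ (2*α) * |m| = (μ*A) ^ (2*α) * |μ ^ (-(2*α)) * m|
    have hμ2' : (0:ℝ) < μ ^ (-(2*α)) := hμ2
    have hμ3' : μ ^ (-(2*α)) * μ ^ (2*α) = 1 := hμ3
    rw [Real.mul_rpow hμ.le hA.le, abs_mul, abs_of_pos hμ2']
    linear_combination (-(A ^ (2*α) * |m|)) * hμ3'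
end

section
/- Classification accuracy formula: for the function u_α of the previous context with x₁ ≠ x₂ (say x₂ > x₁ WLOG by symmetry), the unique zero x* of u_α satisfies: if 2δ μ^{−2α} ≤ |x₂ − x₁| then x* = (1/2)|x₂ − x₁| + δ(1 − μ^{−2α}) and the accuracy 1 − x*/2 equals 1 − δ/2 − (1/4)(|x₂−x₁| − 2δ μ^{−2α}); if 2δ μ^{−2α} ≥ |x₂ − x₁| then x* = (1/2) μ^{2α}|x₂ − x₁| ∈ [−δ, δ] and the accuracy equals 1 − (1/4) μ^{2α}|x₂ − x₁|. -/
set_option maxHeartbeats 1600000 in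
/-- Classification accuracy formula: with `x₂ > x₁`, the unique zero `x*` of `u_α` is as
given in each of the two regimes, and the accuracy `1 − x*/2` has the stated closed form. -/
theorem ualpha_accuracy
    (μ δ x₁ x₂ α : ℝ)
    (hμ : 0 < μ) (hμ1 : μ < 1) (hδ : 0 < δ) (hδ1 : δ < 1)
    (hx₁ : δ ≤ x₁) (hx₁1 : x₁ ≤ 1) (hx₂ : δ ≤ x₂) (hx₂1 : x₂ ≤ 1)
    (hlt : x₁ < x₂)
    (m : ℝ) (hm : m = 2 / (x₁ + x₂ - 2 * δ + 2 * δ * Real.rpow μ (-(2 * α)))) :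
    (2 * δ * Real.rpow μ (-(2 * α)) ≤ x₂ - x₁ →
      ((ualpha μ δ x₁ x₂ α m) ((x₂ - x₁) / 2 + δ * (1 - Real.rpow μ (-(2 * α)))) = 0 ∧
       (∀ x ∈ Set.Icc (-1 : ℝ) 1, (ualpha μ δ x₁ x₂ α m) x = 0 →
          x = (x₂ - x₁) / 2 + δ * (1 - Real.rpow μ (-(2 * α)))) ∧
       1 - ((x₂ - x₁) / 2 + δ * (1 - Real.rpow μ (-(2 * α)))) / 2 =
         1 - δ / 2 - ((x₂ - x₁) - 2 * δ * Real.rpow μ (-(2 * α))) / 4)) ∧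
    (x₂ - x₁ ≤ 2 * δ * Real.rpow μ (-(2 * α)) →
      (Real.rpow μ (2 * α) * (x₂ - x₁) / 2 ∈ Set.Icc (-δ) δ ∧
       (ualpha μ δ x₁ x₂ α m) (Real.rpow μ (2 * α) * (x₂ - x₁) / 2) = 0 ∧
       (∀ x ∈ Set.Icc (-1 : ℝ) 1, (ualpha μ δ x₁ x₂ α m) x = 0 →
          x = Real.rpow μ (2 * α) * (x₂ - x₁) / 2) ∧
       1 - (Real.rpow μ (2 * α) * (x₂ - x₁) / 2) / 2 =
         1 - Real.rpow μ (2 * α) * (x₂ - x₁) / 4)) := by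
 
  have hν : 0 < Real.rpow μ (-(2 * α)) := Real.rpow_pos_of_pos hμ _
  have hw : 0 < Real.rpow μ (2 * α) := Real.rpow_pos_of_pos hμ _
  have hwv : Real.rpow μ (2 * α) * Real.rpow μ (-(2 * α)) = 1 := by
    show μ ^ (2 * α) * μ ^ (-(2 * α)) = 1
    rw [← Real.rpow_add hμ]; simp
  simp only [ualpha]
  set v := Real.rpow μ (-(2 * α)) with hvdef
  set w := Real.rpow μ (2 * α) with hwdef
  have hD : 0 < x₁ + x₂ - 2 * δ + 2 * δ * v := by nlinarith [mul_pos hδ hν]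
  have hmD : m * (x₁ + x₂ - 2 * δ + 2 * δ * v) = 2 := by
    rw [hm]; field_simp
  constructor
  · intro hcase
    refine ⟨?_, ?_, by ring⟩
    · have hs1 : ¬ (x₂ - x₁) / 2 + δ * (1 - v) ≤ -x₁ := by nlinarith [mul_pos hδ hν]
      have hs2 : ¬ (x₂ - x₁) / 2 + δ * (1 - v) ≤ -δ := by nlinarith [mul_pos hδ hν]
      rw [if_neg hs1, if_neg hs2]
      by_cases hs3 : (x₂ - x₁) / 2 + δ * (1 - v) ≤ δ
      · rw [if_pos hs3]
        have heq : 2 * δ * v = x₂ - x₁ := le_antisymm hcase (by nlinarith)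
        linear_combination ((m - v * m) / 2) * heq + (1 / 2) * hmD + (m * (x₁ - δ)) * hwv
      · rw [if_neg hs3, if_pos (show (x₂ - x₁) / 2 + δ * (1 - v) ≤ x₂ by nlinarith [mul_pos hδ hν])]
        linear_combination (-(1 : ℝ) / 2) * hmD
    · intro x hx h
      split_ifs at h with h1 h2 h3 h4
      · norm_num at h
      · exfalso
        have h2' : 2 * (x + x₁) = x₁ + x₂ - 2 * δ + 2 * δ * v := by
          linear_combination (x₁ + x₂ - 2 * δ + 2 * δ * v) * h - (x + x₁) * hmD
        nlinarith [mul_pos hδ hν]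
      · have hkey : 2 * v * x = x₂ - x₁ := by
          linear_combination (x₁ + x₂ - 2 * δ + 2 * δ * v) * h
            - (v * (x + δ) + v * w * (x₁ - δ)) * hmD - 2 * (x₁ - δ) * hwv
        have hxδ : δ ≤ x := by
          by_contra hc
          push_neg at hc
          nlinarith [mul_pos hν (sub_pos.2 hc)]
        have hxd : x = δ := le_antisymm h3 hxδ
        subst hxd
        linear_combination hkey / 2
      · have hkey : 2 * (x - x₂) = -(x₁ + x₂ - 2 * δ + 2 * δ * v) := by
          linear_combination (x₁ + x₂ - 2 * δ + 2 * δ * v) * h - (x - x₂) * hmD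
        linear_combination hkey / 2
      · norm_num at h
  · intro hcase
    have h2δ : w * (2 * δ * v) = 2 * δ := by linear_combination 2 * δ * hwv
    have hub : w * (x₂ - x₁) / 2 ≤ δ := by
      nlinarith [mul_le_mul_of_nonneg_left hcase hw.le]
    have hsub : 0 < x₂ - x₁ := sub_pos.2 hlt
    have hpos : 0 < w * (x₂ - x₁) / 2 := by positivity
    refine ⟨⟨by linarith, hub⟩, ?_, ?_, by ring⟩
    · have hp1 : ¬ w * (x₂ - x₁) / 2 ≤ -x₁ := by nlinarith
      have hp2 : ¬ w * (x₂ - x₁) / 2 ≤ -δ := by nlinarith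
      rw [if_neg hp1, if_neg hp2, if_pos hub]
      linear_combination (1 / 2) * hmD + (m * (x₂ - x₁) / 2 + m * (x₁ - δ)) * hwv
    · intro x hx h
      split_ifs at h with h1 h2 h3 h4
      · norm_num at h
      · exfalso
        have h2' : 2 * (x + x₁) = x₁ + x₂ - 2 * δ + 2 * δ * v := by
          linear_combination (x₁ + x₂ - 2 * δ + 2 * δ * v) * h - (x + x₁) * hmD
        nlinarith [mul_pos hδ hν]
      · have hkey : 2 * v * x = x₂ - x₁ := by
          linear_combination (x₁ + x₂ - 2 * δ + 2 * δ * v) * h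
            - (v * (x + δ) + v * w * (x₁ - δ)) * hmD - 2 * (x₁ - δ) * hwv
        linear_combination (w / 2) * hkey - x * hwv
      · exfalso
        have hkey : 2 * (x - x₂) = -(x₁ + x₂ - 2 * δ + 2 * δ * v) := by
          linear_combination (x₁ + x₂ - 2 * δ + 2 * δ * v) * h - (x - x₂) * hmD
        push_neg at h3
        linarith
      · norm_num at h
end

section
/- Monotonicity of accuracy in α: with 0 < μ < 1, 0 < δ < 1, δ ≤ x₁, x₂ ≤ 1, the accuracy function Acc(α) defined by Acc(α) = 1 − δ/2 − (1/4)(|x₂−x₁| − 2δμ^{−2α}) when 2δμ^{−2α} ≤ |x₂−x₁| and Acc(α) = 1 − (1/4)μ^{2α}|x₂−x₁| when 2δμ^{−2α} ≥ |x₂−x₁| is nondecreasing in α ∈ ℝ, and Acc(α) → 1 as α → ∞. -/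
open Filter

/-- Monotonicity of classification accuracy in `α`: the accuracy function is nondecreasing
in `α ∈ ℝ` and tends to `1` (perfect classification) as `α → ∞`. -/
theorem accuracy_monotone_in_alpha
    (μ δ x₁ x₂ : ℝ)
    (hμ : 0 < μ) (hμ1 : μ < 1) (hδ : 0 < δ) (hδ1 : δ < 1)
    (hx₁ : δ ≤ x₁) (hx₁1 : x₁ ≤ 1) (hx₂ : δ ≤ x₂) (hx₂1 : x₂ ≤ 1) :
    Monotone (fun α : ℝ =>
      if 2 * δ * Real.rpow μ (-(2 * α)) ≤ |x₂ - x₁| then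
        1 - δ / 2 - (|x₂ - x₁| - 2 * δ * Real.rpow μ (-(2 * α))) / 4
      else 1 - Real.rpow μ (2 * α) * |x₂ - x₁| / 4) ∧
    Tendsto (fun α : ℝ =>
      if 2 * δ * Real.rpow μ (-(2 * α)) ≤ |x₂ - x₁| then
        1 - δ / 2 - (|x₂ - x₁| - 2 * δ * Real.rpow μ (-(2 * α))) / 4
      else 1 - Real.rpow μ (2 * α) * |x₂ - x₁| / 4) atTop (nhds 1) := by
  have hD : (0:ℝ) ≤ |x₂ - x₁| := abs_nonneg _
  have hlog : Real.log μ < 0 := Real.log_neg hμ hμ1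
  constructor
  · intro a b hab
    dsimp only
    have hta : Real.rpow μ (-(2*a)) ≤ Real.rpow μ (-(2*b)) :=
      Real.rpow_le_rpow_of_exponent_ge hμ hμ1.le (by linarith)
    have hsb : Real.rpow μ (2*b) ≤ Real.rpow μ (2*a) :=
      Real.rpow_le_rpow_of_exponent_ge hμ hμ1.le (by linarith)
    have hpb : 0 < Real.rpow μ (-(2*b)) := Real.rpow_pos_of_pos hμ _
    have hqb : 0 < Real.rpow μ (2*b) := Real.rpow_pos_of_pos hμ _
    have hinv_b : Real.rpow μ (2*b) * Real.rpow μ (-(2*b)) = 1 := by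
      show μ ^ (2*b) * μ ^ (-(2*b)) = 1
      rw [← Real.rpow_add hμ]; simp
    by_cases ha : 2 * δ * Real.rpow μ (-(2*a)) ≤ |x₂ - x₁|
    · by_cases hb : 2 * δ * Real.rpow μ (-(2*b)) ≤ |x₂ - x₁|
      · rw [if_pos ha, if_pos hb]
        nlinarith
      · rw [if_pos ha, if_neg hb]
        push_neg at hb
        have h1 : Real.rpow μ (2*b) * |x₂ - x₁| < 2 * δ := by
          nlinarith
        linarith
    · have hb : ¬ (2 * δ * Real.rpow μ (-(2*b)) ≤ |x₂ - x₁|) := by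
        intro h
        apply ha
        nlinarith
      rw [if_neg ha, if_neg hb]
      have h2 : Real.rpow μ (2*b) * |x₂ - x₁| ≤ Real.rpow μ (2*a) * |x₂ - x₁| :=
        mul_le_mul_of_nonneg_right hsb hD
      linarith
  · have ht : Tendsto (fun α : ℝ => Real.rpow μ (-(2*α))) atTop atTop := by
      have h1 : Tendsto (fun α : ℝ => Real.log μ * -(2*α)) atTop atTop := by
        have h2 : Tendsto (fun α : ℝ => (-2 * Real.log μ) * α) atTop atTop :=
          (tendsto_const_mul_atTop_of_pos (by linarith)).2 tendsto_id
        refine h2.congr fun α => by ring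
      have h3 := Real.tendsto_exp_atTop.comp h1
      refine h3.congr fun α => ?_
      simp [Function.comp, Real.rpow_def_of_pos hμ]
    have hs : Tendsto (fun α : ℝ => Real.rpow μ (2*α)) atTop (nhds 0) := by
      have h1 : Tendsto (fun α : ℝ => Real.log μ * (2*α)) atTop atBot := by
        have h2 : Tendsto (fun α : ℝ => (2 * Real.log μ) * α) atTop atBot :=
          (tendsto_const_mul_atBot_of_neg (by linarith)).2 tendsto_id
        refine h2.congr fun α => by ring
      have h3 := Real.tendsto_exp_atBot.comp h1
      refine h3.congr fun α => ?_
      simp [Function.comp, Real.rpow_def_of_pos hμ]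
    have hlim : Tendsto (fun α : ℝ => 1 - Real.rpow μ (2*α) * |x₂ - x₁| / 4)
        atTop (nhds 1) := by
      have h4 := (tendsto_const_nhds (x := (1:ℝ)) (f := (atTop : Filter ℝ))).sub
        ((hs.mul_const |x₂ - x₁|).div_const 4)
      simpa using h4
    refine Tendsto.congr' ?_ hlim
    filter_upwards [ht.eventually_gt_atTop (|x₂ - x₁| / (2*δ))] with α hα
    rw [if_neg]
    push_neg
    have h5 := (div_lt_iff₀ (by linarith : (0:ℝ) < 2*δ)).mp hα
    linarith
end

section
/- One-dimensional reduction of the max over a ball via the sphere maximum: for p ≠ 0, A ∈ ℝ^{d×d}, and a continuous kernel Φ : [0,∞) → [0,∞) with support in [0,2], max_{v ∈ B(0,2h)} Φ(|v|/h)(p·v + (1/2)v·Av) = max_{0 ≤ s ≤ 2} { s Φ(s)|p| h + (1/2) s² Φ(s) (|p|^{−2} p·Ap) h² } + O(h³), where the O(h³) constant depends only on ‖A‖ and |p|⁻¹. -/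
/-!
On the sphere `‖v‖ = r` the linear term `⟪p, v⟫` is maximal in the direction `e = p / ‖p‖`, and
it falls short of `r‖p‖` by `r‖p‖u²/2`, where `u` is the distance between `v / r` and `e`. The
quadratic term moves by at most `r²‖A‖u` under that change of direction, so the gain from leaving
the direction `e` is at most `max_u (r²‖A‖u - r‖p‖u²/2) = r³‖A‖²/(2‖p‖)`. Hence the maximum over the
ball is at least the radial maximum (take `v = s h e`) and at most the radial maximum plus
`sup Φ · (2h)³‖A‖²/(2‖p‖)`.
-/

open scoped RealInnerProductSpace

section SupApprox

variable {α β : Type*} {f : α → ℝ} {g : β → ℝ} {S : Set α} {T : Set β} {ε : ℝ}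

theorem sSup_image_le_sSup_image_add (hS : S.Nonempty) (hg : BddAbove (g '' T))
    (hfg : ∀ x ∈ S, ∃ y ∈ T, f x ≤ g y + ε) : sSup (f '' S) ≤ sSup (g '' T) + ε := by
  refine csSup_le (hS.image f) ?_
  rintro _ ⟨x, hx, rfl⟩
  obtain ⟨y, hy, hxy⟩ := hfg x hx
  linarith [le_csSup hg (Set.mem_image_of_mem g hy)]

theorem abs_sSup_image_sub_sSup_image_le (hS : S.Nonempty) (hT : T.Nonempty)
    (hf : BddAbove (f '' S)) (hg : BddAbove (g '' T))
    (hfg : ∀ x ∈ S, ∃ y ∈ T, f x ≤ g y + ε) (hgf : ∀ y ∈ T, ∃ x ∈ S, g y ≤ f x + ε) :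
    |sSup (f '' S) - sSup (g '' T)| ≤ ε := by
  rw [abs_sub_le_iff]
  constructor
  · linarith [sSup_image_le_sSup_image_add hS hg hfg]
  · linarith [sSup_image_le_sSup_image_add hT hf hgf]

end SupApprox

section QuadraticOnBall

variable {E : Type*} [NormedAddCommGroup E] [InnerProductSpace ℝ E]

theorem real_inner_map_self_sub_le (A : E →L[ℝ] E) (x y : E) :
    ⟪x, A x⟫ - ⟪y, A y⟫ ≤ ‖A‖ * ‖x - y‖ * (‖x‖ + ‖y‖) := by
  have hsplit : ⟪x, A x⟫ - ⟪y, A y⟫ = ⟪x - y, A x⟫ + ⟪y, A (x - y)⟫ := by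
    rw [inner_sub_left, map_sub, inner_sub_right]
    ring
  have h₁ : ⟪x - y, A x⟫ ≤ ‖x - y‖ * (‖A‖ * ‖x‖) :=
    (real_inner_le_norm _ _).trans (by gcongr; exact A.le_opNorm x)
  have h₂ : ⟪y, A (x - y)⟫ ≤ ‖y‖ * (‖A‖ * ‖x - y‖) :=
    (real_inner_le_norm _ _).trans (by gcongr; exact A.le_opNorm _)
  linarith

theorem real_inner_smul_map_smul (A : E →L[ℝ] E) (c : ℝ) (x : E) :
    ⟪c • x, A (c • x)⟫ = c ^ 2 * ⟪x, A x⟫ := by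
  rw [map_smul, real_inner_smul_left, real_inner_smul_right]
  ring

theorem inner_add_half_inner_map_le (A : E →L[ℝ] E) {p : E} (hp : p ≠ 0) (v : E) :
    ⟪p, v⟫ + (1 / 2) * ⟪v, A v⟫ ≤
      ‖v‖ * ‖p‖ + (1 / 2) * ‖v‖ ^ 2 * (⟪p, A p⟫ / ‖p‖ ^ 2) + ‖v‖ ^ 3 * ‖A‖ ^ 2 / (2 * ‖p‖) := by
  rcases eq_or_ne v 0 with rfl | hv
  · simp
  have hr : 0 < ‖v‖ := norm_pos_iff.mpr hv
  have hpn : 0 < ‖p‖ := norm_pos_iff.mpr hp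
  set ω := ‖v‖⁻¹ • v
  set e := ‖p‖⁻¹ • p
  have hω : ‖ω‖ = 1 := norm_smul_inv_norm hv
  have he : ‖e‖ = 1 := norm_smul_inv_norm hp
  have hvω : v = ‖v‖ • ω := (smul_inv_smul₀ hr.ne' v).symm
  have hpe : p = ‖p‖ • e := (smul_inv_smul₀ hpn.ne' p).symm
  have hcos : ⟪e, ω⟫ = 1 - ‖ω - e‖ ^ 2 / 2 := by
    rw [norm_sub_sq_real, hω, he, real_inner_comm]
    ring
  set u := ‖ω - e‖
  have hlin : ⟪p, v⟫ = ‖v‖ * ‖p‖ * (1 - u ^ 2 / 2) := by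
    conv_lhs => rw [hvω, hpe]
    rw [real_inner_smul_left, real_inner_smul_right, hcos]
    ring
  have hquad : ⟪v, A v⟫ ≤ ‖v‖ ^ 2 * (⟪p, A p⟫ / ‖p‖ ^ 2 + 2 * ‖A‖ * u) := by
    have hdir : ⟪e, A e⟫ = ⟪p, A p⟫ / ‖p‖ ^ 2 := by
      rw [real_inner_smul_map_smul, inv_pow, inv_mul_eq_div]
    have hdiff := real_inner_map_self_sub_le A ω e
    rw [hω, he] at hdiff
    conv_lhs => rw [hvω]
    rw [real_inner_smul_map_smul, ← hdir]
    gcongr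
    linarith
  -- a concave quadratic in `u`, maximal at `u = ‖v‖‖A‖/‖p‖`
  have hgain : ‖v‖ ^ 2 * ‖A‖ * u - ‖v‖ * ‖p‖ * u ^ 2 / 2 ≤ ‖v‖ ^ 3 * ‖A‖ ^ 2 / (2 * ‖p‖) := by
    rw [le_div_iff₀ (by positivity)]
    nlinarith [mul_nonneg hr.le (sq_nonneg (‖p‖ * u - ‖v‖ * ‖A‖))]
  rw [hlin]
  linarith

variable (Φ : ℝ → ℝ) (p : E) (A : E →L[ℝ] E) (h : ℝ)

noncomputable def ballObjective (v : E) : ℝ :=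
  Φ (‖v‖ / h) * (⟪p, v⟫ + (1 / 2) * ⟪v, A v⟫)

noncomputable def radialObjective (s : ℝ) : ℝ :=
  s * Φ s * ‖p‖ * h + (1 / 2) * s ^ 2 * Φ s * (⟪p, A p⟫ / ‖p‖ ^ 2) * h ^ 2

variable {Φ p h}

theorem norm_smul_smul_inv_norm {s : ℝ} (hs : 0 ≤ s) (hh : 0 < h) (hp : p ≠ 0) :
    ‖(s * h) • (‖p‖⁻¹ • p)‖ = s * h := by
  have he : ‖‖p‖⁻¹ • p‖ = 1 := norm_smul_inv_norm hp
  rw [norm_smul, he, mul_one, Real.norm_of_nonneg (by positivity)]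

theorem radialObjective_eq_ballObjective {s : ℝ} (hs : 0 ≤ s) (hh : 0 < h) (hp : p ≠ 0) :
    radialObjective Φ p A h s = ballObjective Φ p A h ((s * h) • (‖p‖⁻¹ • p)) := by
  rw [ballObjective, norm_smul_smul_inv_norm hs hh hp, real_inner_smul_map_smul,
    real_inner_smul_map_smul, real_inner_smul_right, real_inner_smul_right,
    real_inner_self_eq_norm_sq, mul_div_cancel_right₀ s hh.ne', radialObjective]
  field_simp

theorem ballObjective_le_radialObjective_add (hΦ0 : ∀ s, 0 ≤ Φ s) (hh : 0 < h) (hp : p ≠ 0)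
    {v : E} (hv : ‖v‖ ≤ 2 * h) {M Ka Kp : ℝ} (hΦM : Φ (‖v‖ / h) ≤ M) (hA : ‖A‖ ≤ Ka)
    (hKp : ‖p‖⁻¹ ≤ Kp) :
    ballObjective Φ p A h v ≤ radialObjective Φ p A h (‖v‖ / h) + 4 * M * Ka ^ 2 * Kp * h ^ 3 := by
  have hsh : ‖v‖ / h * h = ‖v‖ := div_mul_cancel₀ _ hh.ne'
  calc ballObjective Φ p A h v
      ≤ Φ (‖v‖ / h) * (‖v‖ * ‖p‖ + (1 / 2) * ‖v‖ ^ 2 * (⟪p, A p⟫ / ‖p‖ ^ 2) +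
          ‖v‖ ^ 3 * ‖A‖ ^ 2 / (2 * ‖p‖)) :=
        mul_le_mul_of_nonneg_left (inner_add_half_inner_map_le A hp v) (hΦ0 _)
    _ = radialObjective Φ p A h (‖v‖ / h) + Φ (‖v‖ / h) * ‖v‖ ^ 3 * ‖A‖ ^ 2 * ‖p‖⁻¹ / 2 := by
        rw [radialObjective]
        generalize ‖v‖ / h = s at hsh ⊢
        rw [← hsh]
        field_simp
    _ ≤ radialObjective Φ p A h (‖v‖ / h) + M * (2 * h) ^ 3 * Ka ^ 2 * Kp / 2 := by
        have hM0 : 0 ≤ M := (hΦ0 _).trans hΦM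
        gcongr
    _ = radialObjective Φ p A h (‖v‖ / h) + 4 * M * Ka ^ 2 * Kp * h ^ 3 := by ring

end QuadraticOnBall

open Metric Set in
theorem ball_max_one_dimensional_reduction_general (d : ℕ) (Φ : ℝ → ℝ)
    (hΦc : Continuous Φ) (hΦ0 : ∀ s, 0 ≤ Φ s)
    (Ka Kp : ℝ) :
    ∃ C : ℝ, ∀ (p : EuclideanSpace ℝ (Fin d))
      (A : EuclideanSpace ℝ (Fin d) →L[ℝ] EuclideanSpace ℝ (Fin d)),
      p ≠ 0 → ‖A‖ ≤ Ka → ‖p‖⁻¹ ≤ Kp → ∀ h : ℝ, 0 < h →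
      |sSup ((fun v : EuclideanSpace ℝ (Fin d) =>
          Φ (‖v‖ / h) * (⟪p, v⟫ + (1 / 2) * ⟪v, A v⟫)) ''
            Metric.closedBall 0 (2 * h)) -
        sSup ((fun s : ℝ =>
          s * Φ s * ‖p‖ * h + (1 / 2) * s ^ 2 * Φ s * (⟪p, A p⟫ / ‖p‖ ^ 2) * h ^ 2) ''
            Set.Icc 0 2)| ≤ C * h ^ 3 := by
  obtain ⟨M, hM⟩ := isCompact_Icc.bddAbove_image (hΦc.continuousOn (s := Icc (0 : ℝ) 2))
  refine ⟨4 * M * Ka ^ 2 * Kp, fun p A hp hA hKp h hh => ?_⟩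
  have hM0 : 0 ≤ M := (hΦ0 0).trans (hM ⟨0, by simp, rfl⟩)
  have hKp0 : 0 ≤ Kp := (inv_nonneg.mpr (norm_nonneg p)).trans hKp
  have hballCont : Continuous (ballObjective Φ p A h) := by unfold ballObjective; fun_prop
  have hradialCont : Continuous (radialObjective Φ p A h) := by unfold radialObjective; fun_prop
  apply abs_sSup_image_sub_sSup_image_le (f := ballObjective Φ p A h)
    (g := radialObjective Φ p A h) ⟨0, by simp; positivity⟩ ⟨0, by simp⟩
    ((isCompact_closedBall _ _).bddAbove_image hballCont.continuousOn)
    (isCompact_Icc.bddAbove_image hradialCont.continuousOn)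
  · intro v hv
    have hvh : ‖v‖ ≤ 2 * h := mem_closedBall_zero_iff.mp hv
    have hs : ‖v‖ / h ∈ Icc 0 2 := ⟨by positivity, (div_le_iff₀ hh).mpr hvh⟩
    exact ⟨_, hs, ballObjective_le_radialObjective_add A hΦ0 hh hp hvh (hM ⟨_, hs, rfl⟩) hA hKp⟩
  · intro s hs
    refine ⟨(s * h) • (‖p‖⁻¹ • p), ?_, ?_⟩
    · rw [mem_closedBall_zero_iff, norm_smul_smul_inv_norm hs.1 hh hp]
      exact mul_le_mul_of_nonneg_right hs.2 hh.le
    · rw [radialObjective_eq_ballObjective A hs.1 hh hp]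
      exact le_add_of_nonneg_right (by positivity)

/-- One-dimensional reduction of the max over a ball via the sphere maximum: for `p ≠ 0`,
a matrix `A`, and a continuous nonnegative kernel `Φ` supported in `[0,2]`,
`max_{v∈B(0,2h)} Φ(|v|/h)(p·v + (1/2)v·Av)` equals
`max_{0≤s≤2} { sΦ(s)|p|h + (1/2)s²Φ(s)(|p|⁻²p·Ap)h² }` up to `O(h³)`, with constant
depending only on `‖A‖` and `|p|⁻¹`. -/
theorem ball_max_one_dimensional_reduction (d : ℕ) (Φ : ℝ → ℝ)
    (hΦc : Continuous Φ) (hΦ0 : ∀ s, 0 ≤ Φ s) (hΦsupp : ∀ s, 2 ≤ s → Φ s = 0)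
    (Ka Kp : ℝ) :
    ∃ C : ℝ, ∀ (p : EuclideanSpace ℝ (Fin d))
      (A : EuclideanSpace ℝ (Fin d) →L[ℝ] EuclideanSpace ℝ (Fin d)),
      p ≠ 0 → ‖A‖ ≤ Ka → ‖p‖⁻¹ ≤ Kp → ∀ h : ℝ, 0 < h →
      |sSup ((fun v : EuclideanSpace ℝ (Fin d) =>
          Φ (‖v‖ / h) * (⟪p, v⟫ + (1 / 2) * ⟪v, A v⟫)) ''
            Metric.closedBall 0 (2 * h)) -
        sSup ((fun s : ℝ =>
          s * Φ s * ‖p‖ * h + (1 / 2) * s ^ 2 * Φ s * (⟪p, A p⟫ / ‖p‖ ^ 2) * h ^ 2) ''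
            Set.Icc 0 2)| ≤ C * h ^ 3 :=
  ball_max_one_dimensional_reduction_general d Φ hΦc hΦ0 Ka Kp
end

section
/- Nondegeneracy of the maximizing radius: in the setting of the previous statement, suppose additionally that Φ(s) ≥ 1 for s ∈ (0,1) and |p| ≥ δ/2 > 0. Let s_h ∈ [0,2] attain max_{0≤s≤2}{ sΦ(s)|p|h + (1/2)s²Φ(s) q h² } where |q| ≤ Q. Then there exist constants c, h₀ > 0 depending only on δ, Q, and Φ such that s_h ≥ c for all 0 < h ≤ h₀. -/
set_option maxHeartbeats 1000000 in
/-- Nondegeneracy of the maximizing radius: if `Φ` is a continuous nonnegative kernel with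
`Φ ≥ 1` on `(0,1)` and `Φ = 0` on `[2,∞)`, then for any gradient size `P ≥ δ/2 > 0` and
bounded coefficient `|q| ≤ Q`, any maximizer `s_h ∈ [0,2]` of
`s ↦ sΦ(s)P h + (1/2)s²Φ(s) q h²` is bounded below by a constant `c > 0` for all
sufficiently small `h > 0`, with `c, h₀` depending only on `δ`, `Q`, and `Φ`. -/
theorem maximizing_radius_nondegenerate (Φ : ℝ → ℝ)
    (hΦc : Continuous Φ) (hΦ0 : ∀ s, 0 ≤ Φ s)
    (hΦ1 : ∀ s ∈ Set.Ioo (0 : ℝ) 1, 1 ≤ Φ s) (hΦsupp : ∀ s, 2 ≤ s → Φ s = 0)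
    (δ Q : ℝ) (hδ : 0 < δ) (hQ : 0 < Q) :
    ∃ c > 0, ∃ h₀ > 0, ∀ h P q sh : ℝ, 0 < h → h ≤ h₀ → δ / 2 ≤ P → |q| ≤ Q →
      sh ∈ Set.Icc (0 : ℝ) 2 →
      (∀ s ∈ Set.Icc (0 : ℝ) 2,
        s * Φ s * P * h + (1 / 2) * s ^ 2 * Φ s * q * h ^ 2 ≤
          sh * Φ sh * P * h + (1 / 2) * sh ^ 2 * Φ sh * q * h ^ 2) →
      c ≤ sh := by
  obtain ⟨m, hm, hmax⟩ := (isCompact_Icc (a := (0:ℝ)) (b := 2)).exists_isMaxOn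
    ⟨0, by norm_num⟩ hΦc.continuousOn
  obtain ⟨M, hMdef⟩ : ∃ M, M = Φ m := ⟨Φ m, rfl⟩
  have hΦhalf : (1:ℝ) ≤ Φ (1/2) := hΦ1 _ (by norm_num)
  have hMhalf : Φ (1/2) ≤ M := hMdef ▸ hmax (by norm_num : (1/2:ℝ) ∈ Set.Icc (0:ℝ) 2)
  have hM1 : (1:ℝ) ≤ M := le_trans hΦhalf hMhalf
  have hMpos : 0 < M := lt_of_lt_of_le one_pos hM1
  refine ⟨1/(4*M), by positivity, δ/(24*M*Q), by positivity, ?_⟩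
  intro h P q sh hh hh0 hP hq hsh hmaxsh
  have hPpos : 0 < P := lt_of_lt_of_le (by positivity) hP
  have hΦsh : Φ sh ≤ M := hMdef ▸ hmax hsh
  have hsh0 : 0 ≤ sh := hsh.1
  have hsh2 : sh ≤ 2 := hsh.2
  obtain ⟨hq1, hq2⟩ := abs_le.mp hq
  have hPh : 0 ≤ P * h := by positivity
  have hh2 : (0:ℝ) ≤ h^2 := sq_nonneg h
  have key := hmaxsh (1/2) (by norm_num)
  -- lower bound on value at 1/2
  have hlow : (1/2) * P * h - M * Q * h^2 ≤
      (1/2) * Φ (1/2) * P * h + (1/2) * (1/2)^2 * Φ (1/2) * q * h^2 := by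
    have h1 : (1/2) * P * h ≤ (1/2) * Φ (1/2) * P * h := by
      nlinarith [mul_nonneg (by linarith : (0:ℝ) ≤ Φ (1/2) - 1) hPh]
    have a1 : -(M * Q) ≤ Φ (1/2) * q := by
      nlinarith [mul_nonneg (hΦ0 (1/2)) (by linarith : (0:ℝ) ≤ q + Q),
        mul_le_mul_of_nonneg_right hMhalf hQ.le]
    have a2 := mul_le_mul_of_nonneg_right a1 hh2
    have hMQh : 0 ≤ M * Q * h^2 := by positivity
    nlinarith [a2]
  -- upper bound on value at sh
  have hup : sh * Φ sh * P * h + (1/2) * sh^2 * Φ sh * q * h^2 ≤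
      sh * M * P * h + 2 * M * Q * h^2 := by
    have h1 : sh * Φ sh * P * h ≤ sh * M * P * h := by
      have := mul_le_mul_of_nonneg_right
        (mul_le_mul_of_nonneg_left hΦsh hsh0) hPh
      nlinarith [this]
    have hA : 0 ≤ sh^2 * Φ sh := mul_nonneg (sq_nonneg sh) (hΦ0 sh)
    have hA4 : sh^2 * Φ sh ≤ 4 * M := by
      have b1 : sh^2 ≤ 4 := by
        have := pow_le_pow_left₀ hsh0 hsh2 2
        norm_num at this ⊢; linarith
      have b2 : sh^2 * Φ sh ≤ 4 * Φ sh := mul_le_mul_of_nonneg_right b1 (hΦ0 sh)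
      have b3 : 4 * Φ sh ≤ 4 * M := by linarith
      linarith
    have a1 : sh^2 * Φ sh * q ≤ 4 * M * Q := by
      nlinarith [mul_nonneg hA (by linarith : (0:ℝ) ≤ Q - q),
        mul_le_mul_of_nonneg_right hA4 hQ.le]
    have a2 := mul_le_mul_of_nonneg_right a1 hh2
    nlinarith [a2]
  have hchain : (1/2) * P * h - M * Q * h^2 ≤ sh * M * P * h + 2 * M * Q * h^2 :=
    le_trans hlow (le_trans key hup)
  clear hmaxsh key hlow hup
  -- 3 M Q h ≤ P/4
  have hsmall : 3 * M * Q * h ≤ P / 4 := by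
    have h1 : 3 * M * Q * h ≤ 3 * M * Q * (δ / (24*M*Q)) :=
      mul_le_mul_of_nonneg_left hh0 (by positivity)
    have h2 : 3 * M * Q * (δ / (24*M*Q)) = δ / 8 := by
      field_simp; ring
    linarith
  have hsmall2 : 3 * M * Q * h * h ≤ P / 4 * h := mul_le_mul_of_nonneg_right hsmall hh.le
  have hfinal : (1/4) * (P * h) ≤ sh * M * (P * h) := by nlinarith [hchain, hsmall2]
  have h6 : (1/4 : ℝ) ≤ sh * M := le_of_mul_le_mul_right hfinal (mul_pos hPpos hh)
  rw [div_le_iff₀ (by positivity : (0:ℝ) < 4 * M)]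
  nlinarith [h6]
end
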